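/- arXiv:1401.6287 — 13 statements merged into one kernel-verified Lean document; each statement's English description precedes it below -/
import Mathlib

section
/- Let n ≥ 2 and let s, s' : ZMod n → ℝ satisfy the interlacing property min{s_i, s_{i+1}} ≤ s'_i ≤ max{s_i, s_{i+1}} for every index i (indices taken modulo n). Then the cyclic variation does not increase: ∑_{i ∈ ZMod n} |s'_{i+1} − s'_i| ≤ ∑_{i ∈ ZMod n} |s_{i+1} − s_i|. -/
lemma abs_split_of_between (a b c : ℝ) (h1 : min a b ≤ c) (h2 : c ≤ max a b) :
    |b - c| + |c - a| = |b - a| := by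
  rcases le_total a b with h | h
  · rw [min_eq_left h] at h1; rw [max_eq_right h] at h2
    rw [abs_of_nonneg (by linarith), abs_of_nonneg (by linarith),
      abs_of_nonneg (by linarith)]; ring
  · rw [min_eq_right h] at h1; rw [max_eq_left h] at h2
    rw [abs_of_nonpos (by linarith), abs_of_nonpos (by linarith),
      abs_of_nonpos (by linarith)]; ring

/-- **Lemma 4 (paper: Blank, "Ergodicity of a collective random walk on a circle").**
If `s' : ZMod n → ℝ` interlaces `s : ZMod n → ℝ`, i.e.
`min (s i) (s (i+1)) ≤ s' i ≤ max (s i) (s (i+1))` for every index `i` (mod `n`),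
then the cyclic variation does not increase. -/
theorem cyclic_variation_nonincreasing_of_interlacing
    (n : ℕ) [NeZero n] (hn : 2 ≤ n) (s s' : ZMod n → ℝ)
    (hinter : ∀ i : ZMod n,
      min (s i) (s (i + 1)) ≤ s' i ∧ s' i ≤ max (s i) (s (i + 1))) :
    ∑ i : ZMod n, |s' (i + 1) - s' i| ≤ ∑ i : ZMod n, |s (i + 1) - s i| := by
  have key : ∀ i : ZMod n, |s (i + 1) - s' i| + |s' i - s i| = |s (i + 1) - s i| :=
    fun i => abs_split_of_between _ _ _ (hinter i).1 (hinter i).2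
  have step : ∀ i : ZMod n,
      |s' (i + 1) - s' i| ≤ |s' (i + 1) - s (i + 1)| + |s (i + 1) - s' i| :=
    fun i => abs_sub_le _ _ _
  have reindex : ∑ i : ZMod n, |s' (i + 1) - s (i + 1)| = ∑ i : ZMod n, |s' i - s i| :=
    Fintype.sum_equiv (Equiv.addRight (1 : ZMod n)) _ _ (fun i => rfl)
  calc ∑ i : ZMod n, |s' (i + 1) - s' i|
      ≤ ∑ i : ZMod n, (|s' (i + 1) - s (i + 1)| + |s (i + 1) - s' i|) :=
        Finset.sum_le_sum fun i _ => step i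
    _ = ∑ i : ZMod n, |s' (i + 1) - s (i + 1)| + ∑ i : ZMod n, |s (i + 1) - s' i| :=
        Finset.sum_add_distrib
    _ = ∑ i : ZMod n, |s' i - s i| + ∑ i : ZMod n, (|s (i + 1) - s i| - |s' i - s i|) := by
        rw [reindex]
        congr 1
        exact Finset.sum_congr rfl fun i _ => by have := key i; linarith
    _ = ∑ i : ZMod n, |s (i + 1) - s i| := by
        rw [Finset.sum_sub_distrib]; ring
end

section
/- Let r, r' ≥ 0 and v ≥ 0 be reals, and let x, y, x̂, ŷ ∈ ℝ satisfy x + r + r' ≤ y and x̂ + r + r' ≤ ŷ. Set Δ := y − x − r − r' and Δ̂ := ŷ − x̂ − r − r', and assume the interaction condition v > min{Δ, Δ̂}. Define the updated positions x₁ := min{x + v, y − r − r'} and x̂₁ := min{x̂ + v, ŷ − r − r'}, and the spins s := x − x̂, S := y − ŷ, s' := x₁ − x̂₁. Then min{s, S} ≤ s' ≤ max{s, S}, and moreover if s ≠ S then |s' − S| < |s − S|. -/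
/-- **Lemma 3 (interlacing) of the paper**, totally asymmetric case: two statically
coupled copies of a pair of neighbouring particles on the line with centers
`x < y` (resp. `x̂ < ŷ`), radii `r, r'` and common jump length `v ≥ 0`; the left
particle jumps to `min (x + v) (y - r - r')`.  If the interaction condition
`v > min Δ Δ̂` holds, then the new spin `s'` interlaces the old spins `s, S`,
and if `s ≠ S` then `|s' - S| < |s - S|`. -/
theorem spin_interlacing_totally_asymmetric
    (r r' v x y xh yh Δ Δh x₁ xh₁ s S s' : ℝ)
    (hr : 0 ≤ r) (hr' : 0 ≤ r') (hv : 0 ≤ v)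
    (hadm : x + r + r' ≤ y) (hadmh : xh + r + r' ≤ yh)
    (hΔ : Δ = y - x - r - r') (hΔh : Δh = yh - xh - r - r')
    (hint : v > min Δ Δh)
    (hx₁ : x₁ = min (x + v) (y - r - r'))
    (hxh₁ : xh₁ = min (xh + v) (yh - r - r'))
    (hs : s = x - xh) (hS : S = y - yh) (hs' : s' = x₁ - xh₁) :
    (min s S ≤ s' ∧ s' ≤ max s S) ∧ (s ≠ S → |s' - S| < |s - S|) := by
  subst hΔ hΔh hx₁ hxh₁ hs hS hs'
  rcases min_lt_iff.mp hint with hd | hd <;>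
  rcases min_cases (x + v) (y - r - r') with ⟨e1, h1⟩ | ⟨e1, h1⟩ <;>
  rcases min_cases (xh + v) (yh - r - r') with ⟨e2, h2⟩ | ⟨e2, h2⟩ <;>
  rw [e1, e2] <;>
  refine ⟨⟨min_le_iff.mpr ?_, le_max_iff.mpr ?_⟩, fun hne => ?_⟩ <;>
  first
  | (left; linarith)
  | (right; linarith)
  | (rcases lt_or_gt_of_ne hne with h | h <;>
     rcases abs_cases ((x - xh) - (y - yh)) with ⟨e3, _⟩ | ⟨e3, _⟩ <;>
     rw [e3] <;>
     rw [abs_lt] <;>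
     constructor <;> linarith)
end

section
/- Let n ≥ 1 and let s : ℤ → ℝ be n-periodic (s_{i+n} = s_i for all i ∈ ℤ). Let m ≥ 1 and let integers i_1 ≤ j_1 ≤ i_2 ≤ j_2 ≤ … ≤ i_m ≤ j_m satisfy j_m ≤ i_1 + n. Then ∑_{i=0}^{n−1} |s_{i+1} − s_i| ≥ 2 ∑_{k=1}^{m} (s_{j_k} − s_{i_k}). -/
/-!
Write `Δ t = s (t + 1) - s t`. Over any window of one period the increments sum to zero, so
`|Δ| = 2 Δ⁺ - Δ` shows that the cyclic variation is twice the sum of the positive parts `Δ⁺`.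
The increase `s (b k) - s (a k)` is the sum of `Δ` over `[a k, b k)`, hence at most the sum of `Δ⁺`
there, and the intervals `[a k, b k)` are disjoint inside the window `[a 0, a 0 + n)`.
-/

open Finset

lemma Int.sum_Ico_add_natCast {M : Type*} [AddCommMonoid M] (f : ℤ → M) (c : ℤ) (n : ℕ) :
    ∑ t ∈ Ico c (c + n), f t = ∑ i ∈ Finset.range n, f (c + i) := by
  rw [Int.Ico_eq_finset_map, sum_map]
  simp

lemma Int.sum_Ico_sub {G : Type*} [AddCommGroup G] (s : ℤ → G) {i j : ℤ} (hij : i ≤ j) :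
    ∑ t ∈ Ico i j, (s (t + 1) - s t) = s j - s i := by
  obtain ⟨k, rfl⟩ := Int.le.dest hij
  rw [Int.sum_Ico_add_natCast]
  simpa [add_assoc] using sum_range_sub (fun l : ℕ ↦ s (i + l)) k

lemma Function.Periodic.sum_Ico_add_period {M : Type*} [AddCancelCommMonoid M] {f : ℤ → M} {n : ℕ}
    (hf : Function.Periodic f n) (c : ℤ) :
    ∑ t ∈ Ico c (c + n), f t = ∑ i ∈ range n, f i := by
  have hshift : Function.Periodic (fun c : ℤ ↦ ∑ i ∈ range n, f (c + i)) 1 := by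
    intro c
    have h := (sum_range_succ (fun i ↦ f (c + i)) n).symm.trans (sum_range_succ' _ n)
    rw [hf c, Nat.cast_zero, add_zero] at h
    simpa [add_assoc, add_comm (1 : ℤ)] using (add_right_cancel h).symm
  have hconst := hshift.int_mul_eq c
  simp only [Int.cast_id, mul_one, zero_add] at hconst
  rw [Int.sum_Ico_add_natCast, hconst]

lemma sum_sum_Ico_le_sum_Ico {α M : Type*} [LinearOrder α] [LocallyFiniteOrder α]
    [AddCommMonoid M] [PartialOrder M] [IsOrderedAddMonoid M] {g : α → M} (hg : 0 ≤ g)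
    {m : ℕ} {a b : ℕ → α} {c d : α} (hca : ∀ k < m, c ≤ a k) (hbd : ∀ k < m, b k ≤ d)
    (hdisj : ∀ k l, k < l → l < m → b k ≤ a l) :
    ∑ k ∈ range m, ∑ t ∈ Ico (a k) (b k), g t ≤ ∑ t ∈ Ico c d, g t := by
  classical
  have hdisj' {k l : ℕ} (hkl : k < l) (hl : l < m) : Disjoint (Ico (a k) (b k)) (Ico (a l) (b l)) :=
    disjoint_left.2 fun t htk htl ↦
      ((mem_Ico.1 htk).2.trans_le (hdisj k l hkl hl)).not_ge (mem_Ico.1 htl).1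
  rw [← sum_biUnion]
  · refine sum_le_sum_of_subset_of_nonneg (biUnion_subset.2 fun k hk ↦ ?_) fun t _ _ ↦ hg t
    exact Ico_subset_Ico (hca k (mem_range.1 hk)) (hbd k (mem_range.1 hk))
  · intro k hk l hl hkl
    rw [coe_range, Set.mem_Iio] at hk hl
    rcases hkl.lt_or_gt with h | h
    · exact hdisj' h hl
    · exact (hdisj' h hk).symm

section Interlaced

variable {α : Type*} [Preorder α] {m : ℕ} {a b : ℕ → α}

lemma right_le_left_of_interlaced
    (hab : ∀ k, k < m → a k ≤ b k) (hba : ∀ k, k + 1 < m → b k ≤ a (k + 1))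
    {k l : ℕ} (hkl : k < l) (hl : l < m) : b k ≤ a l := by
  induction l, hkl using Nat.le_induction with
  | base => exact hba k hl
  | succ l hkl ih => exact (ih (by omega)).trans ((hab l (by omega)).trans (hba l hl))

lemma first_le_left_of_interlaced
    (hab : ∀ k, k < m → a k ≤ b k) (hba : ∀ k, k + 1 < m → b k ≤ a (k + 1))
    {k : ℕ} (hk : k < m) : a 0 ≤ a k := by
  rcases k.eq_zero_or_pos with rfl | hk0
  · rfl
  · exact (hab 0 (by omega)).trans (right_le_left_of_interlaced hab hba hk0 hk)

lemma right_le_last_of_interlaced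
    (hab : ∀ k, k < m → a k ≤ b k) (hba : ∀ k, k + 1 < m → b k ≤ a (k + 1))
    {k : ℕ} (hk : k < m) : b k ≤ b (m - 1) := by
  rcases (Nat.le_sub_one_of_lt hk).lt_or_eq with h | rfl
  · exact (right_le_left_of_interlaced hab hba h (by omega)).trans (hab _ (by omega))
  · rfl

end Interlaced

lemma sub_le_sum_Ico_posPart {G : Type*} [AddCommGroup G] [Lattice G] [IsOrderedAddMonoid G]
    (s : ℤ → G) {i j : ℤ} (hij : i ≤ j) :
    s j - s i ≤ ∑ t ∈ Ico i j, (s (t + 1) - s t)⁺ := by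
  rw [← Int.sum_Ico_sub s hij]
  exact sum_le_sum fun t _ ↦ le_posPart _

lemma sum_Ico_abs_sub_eq (s : ℤ → ℝ) {i j : ℤ} (hij : i ≤ j) :
    ∑ t ∈ Ico i j, |s (t + 1) - s t| = 2 * ∑ t ∈ Ico i j, (s (t + 1) - s t)⁺ - (s j - s i) := by
  have habs (x : ℝ) : |x| = 2 * x⁺ - x := by
    linarith [posPart_add_negPart x, posPart_sub_negPart x]
  rw [← Int.sum_Ico_sub s hij, mul_sum, ← sum_sub_distrib]
  exact sum_congr rfl fun t _ ↦ habs _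

theorem cyclic_variation_ge_twice_increase_general
    (n : ℕ) (s : ℤ → ℝ) (hper : ∀ i : ℤ, s (i + (n : ℤ)) = s i)
    (m : ℕ) (a b : ℕ → ℤ)
    (hab : ∀ k, k < m → a k ≤ b k)
    (hba : ∀ k, k + 1 < m → b k ≤ a (k + 1))
    (hlast : b (m - 1) ≤ a 0 + (n : ℤ)) :
    2 * ∑ k ∈ Finset.range m, (s (b k) - s (a k)) ≤
      ∑ i ∈ Finset.range n, |s ((i : ℤ) + 1) - s (i : ℤ)| := by
  have hperiodic : Function.Periodic (fun t ↦ |s (t + 1) - s t|) n := fun t ↦ by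
    simp only [add_right_comm t (n : ℤ) 1, hper]
  calc 2 * ∑ k ∈ range m, (s (b k) - s (a k))
      ≤ 2 * ∑ k ∈ range m, ∑ t ∈ Ico (a k) (b k), (s (t + 1) - s t)⁺ := by
        gcongr with k hk
        exact sub_le_sum_Ico_posPart s (hab k (mem_range.1 hk))
    _ ≤ 2 * ∑ t ∈ Ico (a 0) (a 0 + n), (s (t + 1) - s t)⁺ := by
        gcongr
        exact sum_sum_Ico_le_sum_Ico (fun t ↦ posPart_nonneg _)
          (fun _ ↦ first_le_left_of_interlaced hab hba)
          (fun k hk ↦ (right_le_last_of_interlaced hab hba hk).trans hlast)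
          (fun _ _ ↦ right_le_left_of_interlaced hab hba)
    _ = ∑ t ∈ Ico (a 0) (a 0 + n), |s (t + 1) - s t| := by
        rw [sum_Ico_abs_sub_eq s (by omega), hper]
        ring
    _ = ∑ i ∈ range n, |s ((i : ℤ) + 1) - s (i : ℤ)| := hperiodic.sum_Ico_add_period (a 0)

/-- **Inequality (3.8) of the paper.**  For an `n`-periodic real sequence `s`,
the cyclic variation `∑_{i=0}^{n-1} |s (i+1) - s i|` is at least twice the total
increase of `s` over any collection of non-overlapping cyclic intervals
`[a k, b k]`, `k = 0, …, m-1`, with `a 0 ≤ b 0 ≤ a 1 ≤ … ≤ b (m-1) ≤ a 0 + n`. -/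
theorem cyclic_variation_ge_twice_increase
    (n : ℕ) (hn : 1 ≤ n) (s : ℤ → ℝ) (hper : ∀ i : ℤ, s (i + (n : ℤ)) = s i)
    (m : ℕ) (hm : 1 ≤ m) (a b : ℕ → ℤ)
    (hab : ∀ k, k < m → a k ≤ b k)
    (hba : ∀ k, k + 1 < m → b k ≤ a (k + 1))
    (hlast : b (m - 1) ≤ a 0 + (n : ℤ)) :
    2 * ∑ k ∈ Finset.range m, (s (b k) - s (a k)) ≤
      ∑ i ∈ Finset.range n, |s ((i : ℤ) + 1) - s (i : ℤ)| :=
  cyclic_variation_ge_twice_increase_general n s hper m a b hab hba hlast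
end

section
/- Let n ≥ 2 and let s, s' : ZMod n → ℝ satisfy the interlacing property min{s_j, s_{j+1}} ≤ s'_j ≤ max{s_j, s_{j+1}} for every index j. Assume there is an index i such that s'_j = s_j for all j ≠ i, that s has a strict local extremum at i, i.e. (s_{i−1} − s_i)(s_i − s_{i+1}) < 0, and that s'_i ≠ s_i. Then the cyclic variation strictly decreases: ∑_{j ∈ ZMod n} |s'_{j+1} − s'_j| < ∑_{j ∈ ZMod n} |s_{j+1} − s_j|. -/
private lemma var_aux (a b c x : ℝ) (h1 : min b c ≤ x) (h2 : x ≤ max b c)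
    (hx : x ≠ b) (hext : (a - b) * (b - c) < 0) :
    |x - a| + |c - x| < |b - a| + |c - b| := by
  rcases le_total b c with h | h
  · have hbc : b < c := by
      rcases lt_or_eq_of_le h with h' | h'
      · exact h'
      · exfalso; rw [h'] at hext; simp at hext
    have hab : b < a := by nlinarith
    rw [min_eq_left h] at h1
    rw [max_eq_right h] at h2
    have hbx : b < x := lt_of_le_of_ne h1 (Ne.symm hx)
    rcases abs_cases (x - a) with ⟨e1, e2⟩ | ⟨e1, e2⟩ <;>
      rcases abs_cases (c - x) with ⟨f1, f2⟩ | ⟨f1, f2⟩ <;>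
      rcases abs_cases (b - a) with ⟨g1, g2⟩ | ⟨g1, g2⟩ <;>
      rcases abs_cases (c - b) with ⟨k1, k2⟩ | ⟨k1, k2⟩ <;>
      linarith
  · have hbc : c < b := by
      rcases lt_or_eq_of_le h with h' | h'
      · exact h'
      · exfalso; rw [← h'] at hext; simp at hext
    have hab : a < b := by nlinarith
    rw [min_eq_right h] at h1
    rw [max_eq_left h] at h2
    have hbx : x < b := lt_of_le_of_ne h2 hx
    rcases abs_cases (x - a) with ⟨e1, e2⟩ | ⟨e1, e2⟩ <;>
      rcases abs_cases (c - x) with ⟨f1, f2⟩ | ⟨f1, f2⟩ <;>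
      rcases abs_cases (b - a) with ⟨g1, g2⟩ | ⟨g1, g2⟩ <;>
      rcases abs_cases (c - b) with ⟨k1, k2⟩ | ⟨k1, k2⟩ <;>
      linarith

/-- **Key step in the proof of Lemma 5 of the paper.**  If `s'` interlaces `s`,
the two functions coincide except at a single index `i`, the spin function `s`
has a strict local extremum at `i` (i.e. `(s (i-1) - s i) * (s i - s (i+1)) < 0`),
and the spin actually changes at `i` (`s' i ≠ s i`), then the cyclic variation
strictly decreases. -/
theorem cyclic_variation_strict_decrease_at_local_extremum
    (n : ℕ) [NeZero n] (hn : 2 ≤ n) (s s' : ZMod n → ℝ)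
    (hinter : ∀ j : ZMod n,
      min (s j) (s (j + 1)) ≤ s' j ∧ s' j ≤ max (s j) (s (j + 1)))
    (i : ZMod n)
    (hfix : ∀ j : ZMod n, j ≠ i → s' j = s j)
    (hext : (s (i - 1) - s i) * (s i - s (i + 1)) < 0)
    (hchg : s' i ≠ s i) :
    ∑ j : ZMod n, |s' (j + 1) - s' j| < ∑ j : ZMod n, |s (j + 1) - s j| := by
  haveI : Fact (1 < n) := ⟨by omega⟩
  have hone : (1 : ZMod n) ≠ 0 := one_ne_zero
  have hne : (i - 1 : ZMod n) ≠ i := fun h => hone (sub_eq_self.mp h)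
  have hip : (i + 1 : ZMod n) ≠ i := fun h => hone (by
    have := add_eq_left.mp h
    exact this)
  set F : ZMod n → ℝ := fun j => |s (j + 1) - s j| - |s' (j + 1) - s' j| with hF
  have hzero : ∀ c : ZMod n, c ∈ Finset.univ → c ≠ i - 1 ∧ c ≠ i → F c = 0 := by
    rintro c - ⟨hc1, hc2⟩
    have h1 : s' c = s c := hfix c hc2
    have h2 : s' (c + 1) = s (c + 1) := by
      apply hfix
      intro h
      apply hc1
      rw [← h]; ring
    simp [hF, h1, h2]
  have hsum : ∑ j : ZMod n, F j = F (i - 1) + F i :=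
    Finset.sum_eq_add_of_mem (i - 1) i (Finset.mem_univ _) (Finset.mem_univ _) hne hzero
  have hi1 : i - 1 + 1 = i := by ring
  have hfa : s' (i - 1) = s (i - 1) := hfix _ hne
  have hfb : s' (i + 1) = s (i + 1) := hfix _ hip
  have e1 : F (i - 1) = |s i - s (i - 1)| - |s' i - s (i - 1)| := by
    simp only [hF, hi1, hfa]
  have e2 : F i = |s (i + 1) - s i| - |s (i + 1) - s' i| := by
    simp only [hF, hfb]
  have hkey := var_aux (s (i - 1)) (s i) (s (i + 1)) (s' i)
    (hinter i).1 (hinter i).2 hchg hext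
  have hpos : 0 < ∑ j : ZMod n, F j := by
    rw [hsum, e1, e2]; linarith
  have hdist : ∑ j : ZMod n, F j =
      (∑ j : ZMod n, |s (j + 1) - s j|) - ∑ j : ZMod n, |s' (j + 1) - s' j| := by
    rw [← Finset.sum_sub_distrib]
  linarith [hdist ▸ hpos]
end

section
/- Let n ≥ 2, let Δ, Δ̂ : ZMod n → ℝ be nonnegative, let j be an index and v ≥ 0. Define the sequentially updated configurations Δ', Δ̂' by Δ'_{j−1} = Δ_{j−1} + min{v, Δ_j}, Δ'_j = Δ_j − min{v, Δ_j}, Δ'_k = Δ_k for k ∉ {j−1, j}, and analogously for Δ̂'. Then ∑_{i ∈ ZMod n} |Δ'_i − Δ̂'_i| ≤ ∑_{i ∈ ZMod n} |Δ_i − Δ̂_i|. -/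
/-!
Both the mass `min v Δ_j` that leaves coordinate `j` and the mass `Δ_j - min v Δ_j` that stays
there are monotone in `Δ_j`, so the discrepancy at `j` splits exactly into a staying and a moving
part; the moving part is absorbed at `j - 1` by the triangle inequality.
-/

/-- The sequential update of the gap process at index `j` with jump length `v`:
only coordinates `j - 1` and `j` change. -/
noncomputable def seqGapUpdate (n : ℕ) (j : ZMod n) (v : ℝ) (Δ : ZMod n → ℝ) :
    ZMod n → ℝ :=
  fun k =>
    if k = j - 1 then Δ (j - 1) + min v (Δ j)
    else if k = j then Δ j - min v (Δ j)
    else Δ k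

section LinearOrderedAddCommGroup

variable {α : Type*} [AddCommGroup α] [LinearOrder α] [IsOrderedAddMonoid α]

lemma min_sub_min_le_sub_of_le (v : α) {a b : α} (h : b ≤ a) :
    min v a - min v b ≤ a - b := by
  rcases le_total v b with hvb | hbv
  · rw [min_eq_left hvb, min_eq_left (hvb.trans h), sub_self, sub_nonneg]
    exact h
  · rw [min_eq_right hbv, sub_le_sub_iff_right]
    exact min_le_right v a

lemma abs_sub_min_sub_add_abs_min_sub_min (v a b : α) :
    |(a - min v a) - (b - min v b)| + |min v a - min v b| = |a - b| := by
  wlog hba : b ≤ a generalizing a b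
  · rw [abs_sub_comm, abs_sub_comm (min v a), abs_sub_comm a]
    exact this b a (le_of_not_ge hba)
  rw [abs_of_nonneg (sub_nonneg.2 (min_le_min_left v hba)), abs_of_nonneg (sub_nonneg.2 hba),
    abs_of_nonneg (sub_nonneg.2 (sub_le_sub_iff.2 ?_))]
  · abel
  rw [add_comm b]
  exact sub_le_sub_iff.1 (min_sub_min_le_sub_of_le v hba)

lemma sum_abs_sub_le_of_eq_off_pair {ι : Type*} [Fintype ι] [DecidableEq ι] {p q : ι}
    (hpq : p ≠ q) {f g f' g' : ι → α} (hf : ∀ i, i ≠ p → i ≠ q → f' i = f i)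
    (hg : ∀ i, i ≠ p → i ≠ q → g' i = g i)
    (hpair : |f' p - g' p| + |f' q - g' q| ≤ |f p - g p| + |f q - g q|) :
    ∑ i, |f' i - g' i| ≤ ∑ i, |f i - g i| := by
  rw [← Finset.sum_add_sum_compl {p, q}, ← Finset.sum_add_sum_compl {p, q},
    Finset.sum_pair hpq, Finset.sum_pair hpq]
  refine add_le_add hpair (Finset.sum_le_sum fun i hi => ?_)
  simp only [Finset.mem_compl, Finset.mem_insert, Finset.mem_singleton, not_or] at hi
  rw [hf i hi.1 hi.2, hg i hi.1 hi.2]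

end LinearOrderedAddCommGroup

section SeqGapUpdate

variable {n : ℕ} (j : ZMod n) (v : ℝ) (Δ : ZMod n → ℝ)

lemma seqGapUpdate_apply_sub_one : seqGapUpdate n j v Δ (j - 1) = Δ (j - 1) + min v (Δ j) :=
  if_pos rfl

lemma seqGapUpdate_apply_self (hj : j - 1 ≠ j) : seqGapUpdate n j v Δ j = Δ j - min v (Δ j) := by
  simp [seqGapUpdate, hj.symm]

lemma seqGapUpdate_apply_of_ne {k : ZMod n} (hk₁ : k ≠ j - 1) (hk₂ : k ≠ j) :
    seqGapUpdate n j v Δ k = Δ k := by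
  simp [seqGapUpdate, hk₁, hk₂]

end SeqGapUpdate

lemma ZMod.sub_one_ne_self {n : ℕ} (hn : 2 ≤ n) (j : ZMod n) : j - 1 ≠ j :=
  have : Fact (1 < n) := ⟨hn⟩
  sub_eq_self.not.2 one_ne_zero

theorem seq_gap_update_l1_nonexpansive_general
    (n : ℕ) [NeZero n] (hn : 2 ≤ n) (Δ Δh : ZMod n → ℝ)
    (j : ZMod n) (v : ℝ) :
    ∑ i : ZMod n, |seqGapUpdate n j v Δ i - seqGapUpdate n j v Δh i| ≤
      ∑ i : ZMod n, |Δ i - Δh i| := by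
  have hj := ZMod.sub_one_ne_self hn j
  refine sum_abs_sub_le_of_eq_off_pair hj
    (fun k hk₁ hk₂ => seqGapUpdate_apply_of_ne j v Δ hk₁ hk₂)
    (fun k hk₁ hk₂ => seqGapUpdate_apply_of_ne j v Δh hk₁ hk₂) ?_
  rw [seqGapUpdate_apply_sub_one, seqGapUpdate_apply_sub_one, seqGapUpdate_apply_self j v Δ hj,
    seqGapUpdate_apply_self j v Δh hj, ← abs_sub_min_sub_add_abs_min_sub_min v (Δ j) (Δh j)]
  calc |Δ (j - 1) + min v (Δ j) - (Δh (j - 1) + min v (Δh j))|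
        + |Δ j - min v (Δ j) - (Δh j - min v (Δh j))|
      ≤ |Δ (j - 1) - Δh (j - 1)| + |min v (Δ j) - min v (Δh j)|
        + |Δ j - min v (Δ j) - (Δh j - min v (Δh j))| := by
        gcongr
        rw [add_sub_add_comm]
        exact abs_add_le _ _
    _ = _ := by ring

/-- **Lemma 9 of the paper.**  A statically coupled sequential update of the gap
process at a single index `j` with a common jump length `v ≥ 0` does not increase
the `ℓ¹`-distance between nonnegative gap configurations. -/
theorem seq_gap_update_l1_nonexpansive
    (n : ℕ) [NeZero n] (hn : 2 ≤ n) (Δ Δh : ZMod n → ℝ)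
    (hΔ : ∀ i, 0 ≤ Δ i) (hΔh : ∀ i, 0 ≤ Δh i)
    (j : ZMod n) (v : ℝ) (hv : 0 ≤ v) :
    ∑ i : ZMod n, |seqGapUpdate n j v Δ i - seqGapUpdate n j v Δh i| ≤
      ∑ i : ZMod n, |Δ i - Δh i| :=
  seq_gap_update_l1_nonexpansive_general n hn Δ Δh j v
end

section
/- For all real numbers a, â, b, b̂ and v the following inequality holds: |(a + min{v, b}) − (â + min{v, b̂})| + |(b − min{v, b}) − (b̂ − min{v, b̂})| ≤ |a − â| + |b − b̂|. -/
/-- **Scalar contraction inequality underlying Lemma 9 of the paper**: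
transferring the amount `min v ·` from one coordinate to an adjacent one is
nonexpansive in the `ℓ¹` norm. -/
theorem transfer_min_l1_nonexpansive (a ah b bh v : ℝ) :
    |(a + min v b) - (ah + min v bh)| + |(b - min v b) - (bh - min v bh)| ≤
      |a - ah| + |b - bh| := by
  have h1 : |(a + min v b) - (ah + min v bh)| ≤ |a - ah| + |min v b - min v bh| := by
    have := abs_add_le (a - ah) (min v b - min v bh)
    calc |(a + min v b) - (ah + min v bh)| = |(a - ah) + (min v b - min v bh)| := by ring_nf
    _ ≤ _ := abs_add_le _ _
  have h2 : |min v b - min v bh| + |(b - min v b) - (bh - min v bh)| ≤ |b - bh| := by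
    rcases le_total v b with h | h <;> rcases le_total v bh with h' | h' <;>
      simp [min_eq_left, min_eq_right, h, h'] <;>
      rcases abs_cases (b - bh) with ⟨e1, f1⟩ | ⟨e1, f1⟩ <;>
      rcases abs_cases (v - bh) with ⟨e2, f2⟩ | ⟨e2, f2⟩ <;>
      rcases abs_cases (b - v) with ⟨e3, f3⟩ | ⟨e3, f3⟩ <;>
      simp only [e1, e2, e3] <;> linarith
  linarith
end

section
/- Let n ≥ 2, let v : ZMod n → [0,∞), and let Δ, Δ̂ : ZMod n → ℝ be nonnegative. Then ∑_{i ∈ ZMod n} |F_v(Δ)_i − F_v(Δ̂)_i| ≤ ∑_{i ∈ ZMod n} |Δ_i − Δ̂_i|. -/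
/-- The parallel gap update map: `F_v(Δ)_i = Δ_i - min (v_i) (Δ_i) + min (v_{i+1}) (Δ_{i+1})`,
indices mod `n`. -/
noncomputable def parGapUpdate (n : ℕ) (v Δ : ZMod n → ℝ) : ZMod n → ℝ :=
  fun i => Δ i - min (v i) (Δ i) + min (v (i + 1)) (Δ (i + 1))


private lemma minsplit_abs (vi x y : ℝ) :
    |(x - min vi x) - (y - min vi y)| + |min vi x - min vi y| = |x - y| := by
  have main : ∀ a b : ℝ, b ≤ a →
      |(a - min vi a) - (b - min vi b)| + |min vi a - min vi b| = |a - b| := by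
    intro a b hba
    have h1 : min vi b ≤ min vi a := min_le_min le_rfl hba
    have h2 : b - min vi b ≤ a - min vi a := by
      rcases le_total vi b with hb | hb
      · rw [min_eq_left hb, min_eq_left (hb.trans hba)]
        linarith
      · rw [min_eq_right hb]
        rcases le_total vi a with ha | ha
        · rw [min_eq_left ha]; linarith
        · rw [min_eq_right ha]; simp
    rw [abs_of_nonneg (by linarith), abs_of_nonneg (by linarith),
        abs_of_nonneg (by linarith)]
    ring
  rcases le_total y x with hxy | hxy
  · exact main x y hxy
  · have := main y x hxy
    rw [abs_sub_comm, abs_sub_comm (min vi x), abs_sub_comm x y]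
    linarith [abs_nonneg ((y - min vi y) - (x - min vi x))]

/-- **Parallel-updating analogue of Lemma 9 of the paper**: a statically coupled
parallel update of the gap process with nonnegative velocities does not increase
the `ℓ¹`-distance between nonnegative gap configurations. -/
theorem par_gap_update_l1_nonexpansive
    (n : ℕ) [NeZero n] (hn : 2 ≤ n) (v : ZMod n → ℝ) (hv : ∀ i, 0 ≤ v i)
    (Δ Δh : ZMod n → ℝ) (hΔ : ∀ i, 0 ≤ Δ i) (hΔh : ∀ i, 0 ≤ Δh i) :
    ∑ i : ZMod n, |parGapUpdate n v Δ i - parGapUpdate n v Δh i| ≤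
      ∑ i : ZMod n, |Δ i - Δh i| := by
  set g : ZMod n → ℝ := fun i => (Δ i - min (v i) (Δ i)) - (Δh i - min (v i) (Δh i)) with hg
  set h : ZMod n → ℝ := fun i => min (v i) (Δ i) - min (v i) (Δh i) with hh
  have key : ∀ i, |g i| + |h i| = |Δ i - Δh i| := by
    intro i
    exact minsplit_abs (v i) (Δ i) (Δh i)
  have step : ∀ i, |parGapUpdate n v Δ i - parGapUpdate n v Δh i| ≤ |g i| + |h (i + 1)| := by
    intro i
    have : parGapUpdate n v Δ i - parGapUpdate n v Δh i = g i + h (i + 1) := by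
      simp [parGapUpdate, hg, hh]; ring
    rw [this]; exact abs_add_le _ _
  calc ∑ i : ZMod n, |parGapUpdate n v Δ i - parGapUpdate n v Δh i|
      ≤ ∑ i : ZMod n, (|g i| + |h (i + 1)|) := Finset.sum_le_sum fun i _ => step i
    _ = ∑ i : ZMod n, |g i| + ∑ i : ZMod n, |h (i + 1)| := Finset.sum_add_distrib
    _ = ∑ i : ZMod n, |g i| + ∑ i : ZMod n, |h i| := by
        congr 1
        exact Fintype.sum_equiv (Equiv.addRight 1) _ _ (fun i => rfl)
    _ = ∑ i : ZMod n, (|g i| + |h i|) := Finset.sum_add_distrib.symm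
    _ = ∑ i : ZMod n, |Δ i - Δh i| := Finset.sum_congr rfl fun i _ => key i
end

section
/- Let n ≥ 2, let r : ZMod n → [0,∞) satisfy L := 1 − 2∑_i r_i > 0, and let v⁰ : ZMod n → ℝ satisfy min_i v⁰_i > L/n. Then for every family of Borel probability measures P_1, …, P_n on ℝ with P_i({x : x ≥ v⁰_i}) = 1 for all i, the parallel-update gap kernel κ on X_L admits infinitely many pairwise distinct invariant probability measures. -/
open MeasureTheory

/-!
When every gap is at most every velocity, each site hands its whole gap to its left neighbour,
so `F_v` is the rotation `Δ ↦ Δ (· + 1)` whatever `v` is. Since the jumps are almost surely at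
least `min v⁰ > L / n`, every configuration of `X_L` whose gaps are all below `min v⁰` is moved
deterministically along its rotation orbit, and the uniform measure on that orbit is invariant.
Perturbing the flat configuration `L / n` by `± t` at two neighbouring sites gives, for all small
`t > 0`, such orbits, told apart by their largest gap `L / n + t`.
-/

open Finset
open scoped ENNReal

namespace ParGap

variable {n : ℕ} {α : Type*}

def rotate (k : ZMod n) (Δ : ZMod n → α) : ZMod n → α :=
  fun i => Δ (i + k)

@[simp]
lemma rotate_apply (k : ZMod n) (Δ : ZMod n → α) (i : ZMod n) : rotate k Δ i = Δ (i + k) := rfl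

@[simp]
lemma rotate_zero (Δ : ZMod n → α) : rotate 0 Δ = Δ := by
  funext i; simp

lemma rotate_rotate (j k : ZMod n) (Δ : ZMod n → α) :
    rotate j (rotate k Δ) = rotate (j + k) Δ := by
  funext i; simp [add_assoc]

lemma sum_rotate [NeZero n] [AddCommMonoid α] (k : ZMod n) (Δ : ZMod n → α) :
    ∑ i, rotate k Δ i = ∑ i, Δ i :=
  Fintype.sum_equiv (Equiv.addRight k) _ _ fun _ => rfl

lemma parGapUpdate_of_forall_le {v Δ : ZMod n → ℝ} (h : ∀ i, Δ i ≤ v i) :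
    parGapUpdate n v Δ = rotate 1 Δ := by
  funext i; simp [parGapUpdate, min_eq_right (h _)]

section OrbitMeasure

variable [NeZero n] [MeasurableSpace α] [MeasurableSingletonClass α]

/-- Each rotation is counted once, so orbit points are weighted by the size of their stabiliser. -/
noncomputable def orbitMeasure (Δ : ZMod n → α) : Measure (ZMod n → α) :=
  (n : ℝ≥0∞)⁻¹ • ∑ k, Measure.dirac (rotate k Δ)

lemma orbitMeasure_apply (Δ : ZMod n → α) (A : Set (ZMod n → α)) :
    orbitMeasure Δ A = (n : ℝ≥0∞)⁻¹ * ∑ k, A.indicator 1 (rotate k Δ) := by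
  simp [orbitMeasure, Measure.dirac_apply]

lemma orbitMeasure_eq_one {Δ : ZMod n → α} {A : Set (ZMod n → α)} (h : ∀ k, rotate k Δ ∈ A) :
    orbitMeasure Δ A = 1 := by
  simp only [orbitMeasure_apply, Set.indicator_of_mem (h _), Pi.one_apply, sum_const, card_univ,
    ZMod.card, nsmul_eq_mul, mul_one]
  exact ENNReal.inv_mul_cancel (NeZero.ne _) (ENNReal.natCast_ne_top n)

instance (Δ : ZMod n → α) : IsProbabilityMeasure (orbitMeasure Δ) :=
  ⟨orbitMeasure_eq_one fun _ => Set.mem_univ _⟩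

lemma orbitMeasure_ne_zero_iff {Δ : ZMod n → α} {A : Set (ZMod n → α)} :
    orbitMeasure Δ A ≠ 0 ↔ ∃ k, rotate k Δ ∈ A := by
  simp [orbitMeasure_apply, ENNReal.natCast_ne_top]

lemma exists_rotate_eq_of_orbitMeasure_eq {Δ Δ' : ZMod n → α}
    (h : orbitMeasure Δ = orbitMeasure Δ') : ∃ k, rotate k Δ' = Δ := by
  have : orbitMeasure Δ {Δ} ≠ 0 := orbitMeasure_ne_zero_iff.2 ⟨0, by simp⟩
  simpa [h, orbitMeasure_ne_zero_iff] using this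

lemma lintegral_orbitMeasure (Δ : ZMod n → α) (g : (ZMod n → α) → ℝ≥0∞) :
    ∫⁻ x, g x ∂orbitMeasure Δ = (n : ℝ≥0∞)⁻¹ * ∑ k, g (rotate k Δ) := by
  simp [orbitMeasure]

/-- Invariance criterion: a kernel sending each orbit point `x` to `δ_{rotate 1 x}` preserves
the orbit measure. -/
lemma lintegral_orbitMeasure_eq_of_rotate_one {Δ : ZMod n → α} {g : (ZMod n → α) → ℝ≥0∞}
    {A : Set (ZMod n → α)} (hg : ∀ k, g (rotate k Δ) = A.indicator 1 (rotate 1 (rotate k Δ))) :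
    ∫⁻ x, g x ∂orbitMeasure Δ = orbitMeasure Δ A := by
  rw [lintegral_orbitMeasure, orbitMeasure_apply]
  congr 1
  simp only [hg, rotate_rotate]
  exact Fintype.sum_equiv (Equiv.addLeft 1) _ _ fun _ => rfl

end OrbitMeasure

lemma measure_preimage_eq_indicator_of_ae_eq {β γ : Type*} [MeasurableSpace β]
    {μ : Measure β} [IsProbabilityMeasure μ] {f : β → γ} {b : γ} (hf : ∀ᵐ x ∂μ, f x = b)
    (A : Set γ) : μ (f ⁻¹' A) = A.indicator 1 b := by
  have : f ⁻¹' A =ᵐ[μ] {_x | b ∈ A} :=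
    Filter.eventuallyEq_set.2 (by filter_upwards [hf] with x hx using by simp [hx])
  rw [measure_congr this]
  by_cases hb : b ∈ A <;> simp [hb]

lemma ae_pi_forall {ι : Type*} [Fintype ι] {β : ι → Type*} [∀ i, MeasurableSpace (β i)]
    {μ : ∀ i, Measure (β i)} [∀ i, SigmaFinite (μ i)] {p : ∀ i, β i → Prop}
    (h : ∀ i, ∀ᵐ x ∂μ i, p i x) : ∀ᵐ v ∂Measure.pi μ, ∀ i, p i (v i) :=
  Measure.ae_pi_le_pi (Filter.eventually_pi h)

lemma lintegral_parGapUpdate_orbitMeasure [NeZero n] {Q : Measure (ZMod n → ℝ)}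
    [IsProbabilityMeasure Q] {Δ : ZMod n → ℝ} (hΔ : ∀ᵐ v ∂Q, ∀ i j, Δ i ≤ v j)
    (A : Set (ZMod n → ℝ)) :
    ∫⁻ x, Q ((fun v => parGapUpdate n v x) ⁻¹' A) ∂orbitMeasure Δ = orbitMeasure Δ A := by
  refine lintegral_orbitMeasure_eq_of_rotate_one fun k => ?_
  refine measure_preimage_eq_indicator_of_ae_eq ?_ A
  filter_upwards [hΔ] with v hv
  exact parGapUpdate_of_forall_le fun i => hv _ i

noncomputable def bump (c t : ℝ) : ZMod n → ℝ :=
  fun i => c + (Pi.single 0 t : ZMod n → ℝ) i - (Pi.single 1 t : ZMod n → ℝ) i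

lemma sum_bump [NeZero n] (c t : ℝ) : ∑ i, bump (n := n) c t i = n * c := by
  simp [bump, sum_add_distrib, sum_sub_distrib]

lemma bump_le {c t : ℝ} (ht : 0 ≤ t) (i : ZMod n) : bump c t i ≤ c + t := by
  simp only [bump, Pi.single_apply]; split_ifs <;> linarith

lemma bump_nonneg {c t : ℝ} (ht : 0 ≤ t) (htc : t ≤ c) (i : ZMod n) : 0 ≤ bump c t i := by
  simp only [bump, Pi.single_apply]; split_ifs <;> linarith

lemma bump_zero (h01 : (0 : ZMod n) ≠ 1) (c t : ℝ) : bump (n := n) c t 0 = c + t := by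
  simp [bump, h01]

lemma le_of_rotate_bump_eq (h01 : (0 : ZMod n) ≠ 1) {c s t : ℝ} (hs : 0 ≤ s) {k : ZMod n}
    (h : rotate k (bump c t) = bump c s) : t ≤ s := by
  have := bump_le (c := c) hs (-k)
  rw [← h, rotate_apply, neg_add_cancel, bump_zero h01] at this
  linarith

lemma injOn_orbitMeasure_bump [NeZero n] (h01 : (0 : ZMod n) ≠ 1) (c : ℝ) :
    Set.InjOn (fun t => orbitMeasure (bump (n := n) c t)) (Set.Ioi 0) := by
  intro s hs t ht hst
  obtain ⟨k, hk⟩ := exists_rotate_eq_of_orbitMeasure_eq hst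
  obtain ⟨k', hk'⟩ := exists_rotate_eq_of_orbitMeasure_eq hst.symm
  exact le_antisymm (le_of_rotate_bump_eq h01 (le_of_lt ht) hk')
    (le_of_rotate_bump_eq h01 (le_of_lt hs) hk)

end ParGap

open ParGap

theorem par_gap_kernel_infinitely_many_invariant_measures_of_large_jumps_general
    (n : ℕ) [NeZero n] (hn : 2 ≤ n)
    (L : ℝ) (hL : 0 < L)
    (v0 : ZMod n → ℝ) (hv0 : ∀ i, L / n < v0 i)
    (P : ZMod n → Measure ℝ) [∀ i, IsProbabilityMeasure (P i)]
    (hP : ∀ i, P i (Set.Ici (v0 i)) = 1) :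
    {μ : Measure (ZMod n → ℝ) |
      IsProbabilityMeasure μ ∧
      μ {Δ | (∀ i, 0 ≤ Δ i) ∧ ∑ i : ZMod n, Δ i = L} = 1 ∧
      ∀ A : Set (ZMod n → ℝ), MeasurableSet A →
        ∫⁻ Δ, Measure.pi P ((fun v => parGapUpdate n v Δ) ⁻¹' A) ∂μ = μ A}.Infinite := by
  have h01 : (0 : ZMod n) ≠ 1 := by
    have : Fact (1 < n) := ⟨hn⟩
    exact zero_ne_one
  set c := L / n
  have hc : 0 < c := by positivity
  set m := univ.inf' univ_nonempty v0
  have hcm : c < m := (lt_inf'_iff _).2 fun i _ => hv0 i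
  have hjump : ∀ᵐ v ∂Measure.pi P, ∀ j, m ≤ v j := ae_pi_forall fun j => by
    filter_upwards [mem_ae_iff.2 ((prob_compl_eq_zero_iff measurableSet_Ici).2 (hP j))] with x hx
    exact (inf'_le _ (mem_univ j)).trans hx
  refine ((Set.Ioo_infinite (lt_min (sub_pos.2 hcm) hc)).image
    ((injOn_orbitMeasure_bump h01 c).mono Set.Ioo_subset_Ioi_self)).mono ?_
  rintro _ ⟨t, ⟨ht, htε⟩, rfl⟩
  have hct : c + t < m := by linarith [min_le_left (m - c) c]
  refine ⟨inferInstance, orbitMeasure_eq_one fun k => ⟨fun i => ?_, ?_⟩, fun A _ => ?_⟩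
  · exact bump_nonneg ht.le (htε.le.trans (min_le_right _ _)) _
  · rw [sum_rotate, sum_bump]; exact mul_div_cancel₀ L (by positivity)
  · refine lintegral_parGapUpdate_orbitMeasure ?_ A
    filter_upwards [hjump] with v hv i j
    linarith [bump_le (n := n) (c := c) ht.le i, hv j]

/-- **Proposition 1 of the paper** (with `∑ v⁰_i > L` strengthened to
`min_i v⁰_i > L/n`): failure of unique ergodicity of the parallel-update gap
kernel due to excessively large local jumps.  The set of invariant probability
measures of the kernel `κ(Δ) = (⊗_i P_i).map (v ↦ F_v Δ)` on
`X_L = {Δ | ∀ i, 0 ≤ Δ i, ∑ i, Δ i = L}` is infinite. -/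
theorem par_gap_kernel_infinitely_many_invariant_measures_of_large_jumps
    (n : ℕ) [NeZero n] (hn : 2 ≤ n)
    (r : ZMod n → ℝ) (hr : ∀ i, 0 ≤ r i)
    (L : ℝ) (hLdef : L = 1 - 2 * ∑ i : ZMod n, r i) (hL : 0 < L)
    (v0 : ZMod n → ℝ) (hv0 : ∀ i, L / n < v0 i)
    (P : ZMod n → Measure ℝ) [∀ i, IsProbabilityMeasure (P i)]
    (hP : ∀ i, P i (Set.Ici (v0 i)) = 1) :
    {μ : Measure (ZMod n → ℝ) |
      IsProbabilityMeasure μ ∧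
      μ {Δ | (∀ i, 0 ≤ Δ i) ∧ ∑ i : ZMod n, Δ i = L} = 1 ∧
      ∀ A : Set (ZMod n → ℝ), MeasurableSet A →
        ∫⁻ Δ, Measure.pi P ((fun v => parGapUpdate n v Δ) ⁻¹' A) ∂μ = μ A}.Infinite :=
  par_gap_kernel_infinitely_many_invariant_measures_of_large_jumps_general n hn L hL v0 hv0 P hP
end

section
/- Let n ≥ 2, let r : ZMod n → [0,∞) satisfy L := 1 − 2∑_i r_i > 0, and let ε > 0 satisfy L < nε. Let P_1, …, P_n be Borel probability measures on ℝ with P_i([−ε, ε]) = 0 for all i, and let κ be the strict-exclusion parallel gap kernel on X_L. Then every Δ ∈ X_L with max_i Δ_i < ε satisfies κ(Δ) = δ_Δ (the Dirac measure at Δ); in particular κ has infinitely many pairwise distinct invariant probability measures. -/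
open MeasureTheory

/-- Displacement of particle `i` under the strict exclusion rule: the particle
moves by `v_i` if the jump keeps admissibility, and stays put otherwise. -/
noncomputable def strictDisp (n : ℕ) (Δ v : ZMod n → ℝ) (i : ZMod n) : ℝ :=
  if (0 ≤ v i ∧ v i ≤ Δ i) ∨ (-(Δ (i - 1)) ≤ v i ∧ v i < 0) then v i else 0

/-- The strict-exclusion parallel gap update map. -/
noncomputable def strictGapUpdate (n : ℕ) (v Δ : ZMod n → ℝ) : ZMod n → ℝ :=
  fun i => Δ i - strictDisp n Δ v i + strictDisp n Δ v (i + 1)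

/-!
All jumps have size `> ε`, while every gap is `< ε`: a particle jumping forward would overshoot
the gap in front of it, and one jumping backward the gap behind it, so under strict exclusion
nobody moves and `Δ` is a fixed point of the kernel. Configurations with all gaps `< ε` exist in
abundance because `L / n < ε`: perturbing the uniform configuration `L / n` along a segment gives
infinitely many of them, and their Dirac masses are distinct invariant measures.
-/

open Set

section StrictExclusion

variable {n : ℕ} {ε : ℝ} {Δ v : ZMod n → ℝ}

theorem strictDisp_eq_zero (hΔ : ∀ i, Δ i < ε) {i : ZMod n} (hv : v i ∉ Icc (-ε) ε) :
    strictDisp n Δ v i = 0 := by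
  rw [strictDisp, if_neg]
  rintro (⟨h₀, h⟩ | ⟨h, h₀⟩)
  · exact hv ⟨by linarith [hΔ i], by linarith [hΔ i]⟩
  · exact hv ⟨by linarith [hΔ (i - 1)], by linarith [hΔ (i - 1)]⟩

theorem strictGapUpdate_eq_self (hΔ : ∀ i, Δ i < ε) (hv : ∀ i, v i ∉ Icc (-ε) ε) :
    strictGapUpdate n v Δ = Δ := by
  funext i
  simp only [strictGapUpdate, strictDisp_eq_zero hΔ (hv _), sub_zero, add_zero]

variable [NeZero n] {P : ZMod n → Measure ℝ}

theorem ae_strictGapUpdate_eq_self [∀ i, SigmaFinite (P i)]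
    (hP : ∀ i, P i (Icc (-ε) ε) = 0) (hΔ : ∀ i, Δ i < ε) :
    ∀ᵐ v ∂Measure.pi P, strictGapUpdate n v Δ = Δ := by
  have hjumps : ∀ᵐ v ∂Measure.pi P, ∀ i, v i ∉ Icc (-ε) ε :=
    ae_all_iff.2 fun i =>
      Measure.tendsto_eval_ae_ae.eventually (measure_eq_zero_iff_ae_notMem.1 (hP i))
  filter_upwards [hjumps] with v hv using strictGapUpdate_eq_self hΔ hv

theorem map_strictGapUpdate_eq_dirac [∀ i, IsProbabilityMeasure (P i)]
    (hP : ∀ i, P i (Icc (-ε) ε) = 0) (hΔ : ∀ i, Δ i < ε) :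
    (Measure.pi P).map (fun v => strictGapUpdate n v Δ) = Measure.dirac Δ := by
  rw [Measure.map_congr (ae_strictGapUpdate_eq_self hP hΔ), Measure.map_const, measure_univ,
    one_smul]

end StrictExclusion

theorem lintegral_dirac_map_eq_of_map_eq_dirac {Ω X : Type*} [MeasurableSpace Ω]
    [MeasurableSpace X] [MeasurableSingletonClass X] {μ : Measure Ω} {G : X → Ω → X} {x : X}
    (hx : μ.map (G x) = Measure.dirac x) {A : Set X} (hA : MeasurableSet A) :
    ∫⁻ y, μ (G y ⁻¹' A) ∂Measure.dirac x = Measure.dirac x A := by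
  have hG : AEMeasurable (G x) μ :=
    AEMeasurable.of_map_ne_zero (hx ▸ Measure.dirac_ne_zero)
  rw [lintegral_dirac, ← Measure.map_apply_of_aemeasurable hG hA, hx]

theorem infinite_setOf_nonneg_sum_eq_lt {ι : Type*} [Fintype ι] [Nontrivial ι] {L ε : ℝ}
    (hL : 0 < L) (hLε : L < Fintype.card ι * ε) :
    {x : ι → ℝ | (∀ i, 0 ≤ x i) ∧ ∑ i, x i = L ∧ ∀ i, x i < ε}.Infinite := by
  classical
  obtain ⟨i, j, hij⟩ := exists_pair_ne ι
  set m : ℝ := L / Fintype.card ι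
  have hcard : (0 : ℝ) < Fintype.card ι := Nat.cast_pos.2 Fintype.card_pos
  have hm : 0 < m := div_pos hL hcard
  have hmε : m < ε := (div_lt_iff₀ hcard).2 (by linarith)
  let x : ℝ → ι → ℝ := fun t => Function.const ι m + Pi.single i t - Pi.single j t
  have hx_inj : Function.Injective x := fun s t hst => by
    simpa [x, hij.symm] using congrFun hst i
  have hx_near : ∀ t k, 0 ≤ t → m - t ≤ x t k ∧ x t k ≤ m + t := fun t k ht => by
    simp only [x, Pi.sub_apply, Pi.add_apply, Function.const_apply, Pi.single_apply]
    split_ifs with hki hkj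
    · exact absurd (hki.symm.trans hkj) hij
    all_goals constructor <;> linarith
  refine ((Ioo_infinite (lt_min hm (sub_pos.2 hmε))).image hx_inj.injOn).mono ?_
  rintro _ ⟨t, ⟨ht₀, ht⟩, rfl⟩
  rw [lt_min_iff] at ht
  refine ⟨fun k => ?_, ?_, fun k => ?_⟩
  · linarith [(hx_near t k ht₀.le).1]
  · simp only [x, Finset.sum_sub_distrib, Finset.sum_add_distrib, Pi.sub_apply, Pi.add_apply,
      Function.const_apply, Finset.sum_pi_single', Finset.mem_univ, if_true, Finset.sum_const,
      Finset.card_univ, nsmul_eq_mul, m]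
    rw [mul_div_cancel₀ _ hcard.ne', add_sub_cancel_right]
  · linarith [(hx_near t k ht₀.le).2]

theorem strict_exclusion_kernel_nonergodic_general
    (n : ℕ) [NeZero n] (hn : 2 ≤ n)
    (L : ℝ) (hL : 0 < L)
    (ε : ℝ) (hLε : L < n * ε)
    (P : ZMod n → Measure ℝ) [∀ i, IsProbabilityMeasure (P i)]
    (hP : ∀ i, P i (Set.Icc (-ε) ε) = 0) :
    (∀ Δ : ZMod n → ℝ, (∀ i, 0 ≤ Δ i) → (∑ i : ZMod n, Δ i = L) →
      (∀ i, Δ i < ε) →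
      (Measure.pi P).map (fun v => strictGapUpdate n v Δ) = Measure.dirac Δ) ∧
    {μ : Measure (ZMod n → ℝ) |
      IsProbabilityMeasure μ ∧
      μ {Δ | (∀ i, 0 ≤ Δ i) ∧ ∑ i : ZMod n, Δ i = L} = 1 ∧
      ∀ A : Set (ZMod n → ℝ), MeasurableSet A →
        ∫⁻ Δ, Measure.pi P ((fun v => strictGapUpdate n v Δ) ⁻¹' A) ∂μ = μ A}.Infinite := by
  have : Nontrivial (ZMod n) := ZMod.nontrivial_iff.2 (by omega)
  have hfixed := infinite_setOf_nonneg_sum_eq_lt (ι := ZMod n) hL (by rwa [ZMod.card])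
  refine ⟨fun Δ _ _ hΔ => map_strictGapUpdate_eq_dirac hP hΔ,
    (hfixed.image (injective_dirac (α := ZMod n → ℝ)).injOn).mono ?_⟩
  rintro _ ⟨Δ, ⟨hΔ₀, hΔL, hΔ⟩, rfl⟩
  exact ⟨inferInstance, Measure.dirac_apply_of_mem ⟨hΔ₀, hΔL⟩, fun A hA =>
    lintegral_dirac_map_eq_of_map_eq_dirac (map_strictGapUpdate_eq_dirac hP hΔ) hA⟩

/-- **Proposition 10 of the paper.**  If each jump distribution `P_i` gives zero
mass to `[-ε, ε]` and `L < n ε`, then every admissible gap configuration `Δ`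
with all gaps `< ε` is a fixed point of the strict-exclusion parallel gap
kernel (`κ(Δ)` is the Dirac measure at `Δ`); in particular the kernel has
infinitely many pairwise distinct invariant probability measures. -/
theorem strict_exclusion_kernel_nonergodic
    (n : ℕ) [NeZero n] (hn : 2 ≤ n)
    (r : ZMod n → ℝ) (hr : ∀ i, 0 ≤ r i)
    (L : ℝ) (hLdef : L = 1 - 2 * ∑ i : ZMod n, r i) (hL : 0 < L)
    (ε : ℝ) (hε : 0 < ε) (hLε : L < n * ε)
    (P : ZMod n → Measure ℝ) [∀ i, IsProbabilityMeasure (P i)]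
    (hP : ∀ i, P i (Set.Icc (-ε) ε) = 0) :
    (∀ Δ : ZMod n → ℝ, (∀ i, 0 ≤ Δ i) → (∑ i : ZMod n, Δ i = L) →
      (∀ i, Δ i < ε) →
      (Measure.pi P).map (fun v => strictGapUpdate n v Δ) = Measure.dirac Δ) ∧
    {μ : Measure (ZMod n → ℝ) |
      IsProbabilityMeasure μ ∧
      μ {Δ | (∀ i, 0 ≤ Δ i) ∧ ∑ i : ZMod n, Δ i = L} = 1 ∧
      ∀ A : Set (ZMod n → ℝ), MeasurableSet A →
        ∫⁻ Δ, Measure.pi P ((fun v => strictGapUpdate n v Δ) ⁻¹' A) ∂μ = μ A}.Infinite :=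
  strict_exclusion_kernel_nonergodic_general n hn L hL ε hLε P hP
end

section
/- Let r, r' ≥ 0, let v > 0 > w be reals, and let x, y, x̂, ŷ ∈ ℝ satisfy x + r + r' ≤ y and x̂ + r + r' ≤ ŷ. Set Δ := y − x − r − r' and Δ̂ := ŷ − x̂ − r − r', and assume v − w > min{Δ, Δ̂}. Define the updated positions: if v − w > Δ then x₁ := x + Δ·v/(v − w) and y₁ := y + Δ·w/(v − w), otherwise x₁ := x + v and y₁ := y + w; define x̂₁, ŷ₁ analogously using Δ̂ in place of Δ. Set s := x − x̂, S := y − ŷ, s' := x₁ − x̂₁, S' := y₁ − ŷ₁. Then min{s, S} ≤ s' ≤ max{s, S} and min{s, S} ≤ S' ≤ max{s, S}, and moreover if s ≠ S then |s' − S'| < |s − S|. -/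
/-!
Write `d = v - w`. A copy with gap `Δ` moves for the fraction `min Δ d / d` of the time step,
so its particles advance by `v / d * min Δ d` and `w / d * min Δ d`. Since `Δ - Δh = S - s` and
`t ↦ min t d` is monotone and 1-Lipschitz, `m = min Δ d - min Δh d` lies between `0` and `S - s`.
Hence `s' = s + v / d * m` and `S' = S + (-w / d) * (-m)` lie between `s` and `S`, while
`s' - S' = (s - S) + m` is strictly shorter than `s - S` as soon as `m ≠ 0`, which the conflict
`min Δ Δh < d` guarantees when `Δ ≠ Δh`.
-/

open Set

theorem min_sub_min_ne_zero {α : Type*} [AddGroup α] [LinearOrder α] {a b c : α} (hab : a ≠ b)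
    (hc : min a b < c) : min a c - min b c ≠ 0 := by
  rw [sub_ne_zero]
  rcases hab.lt_or_gt with hab | hba
  · have hac : a < c := by rwa [min_eq_left hab.le] at hc
    rw [min_eq_left hac.le]
    exact (lt_min hab hac).ne
  · have hbc : b < c := by rwa [min_eq_right hba.le] at hc
    rw [min_eq_left hbc.le]
    exact (lt_min hba hbc).ne'

section OrderedAddCommGroup

variable {α : Type*} [AddCommGroup α] [LinearOrder α] [IsOrderedAddMonoid α]

theorem min_sub_min_mem_Icc_of_le {a b : α} (hba : b ≤ a) (c : α) :
    min a c - min b c ∈ Icc 0 (a - b) := by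
  refine ⟨sub_nonneg.mpr (min_le_min_right c hba), sub_le_iff_le_add'.mpr ?_⟩
  calc min a c ≤ min a (c + (a - b)) :=
        min_le_min_left a (le_add_of_nonneg_right (sub_nonneg.mpr hba))
    _ = min b c + (a - b) := by rw [← min_add_add_right, add_sub_cancel]

theorem min_sub_min_mem_uIcc (a b c : α) : min a c - min b c ∈ uIcc 0 (a - b) := by
  rcases le_total b a with hba | hab
  · exact Icc_subset_uIcc (min_sub_min_mem_Icc_of_le hba c)
  · rw [← neg_sub b a, ← neg_sub (min b c), ← neg_zero, ← image_neg_uIcc]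
    exact mem_image_of_mem _ (Icc_subset_uIcc (min_sub_min_mem_Icc_of_le hab c))

theorem abs_add_lt_abs_of_mem_uIcc {u m : α} (hm : m ∈ uIcc 0 (-u)) (hm0 : m ≠ 0) :
    |u + m| < |u| := by
  rcases mem_uIcc.mp hm with ⟨hm_nonneg, hm_le⟩ | ⟨hm_ge, hm_nonpos⟩
  · rw [abs_of_nonpos (le_neg_iff_add_nonpos_left.mp hm_le),
      abs_of_nonpos (neg_nonneg.mp (hm_nonneg.trans hm_le))]
    exact neg_lt_neg (lt_add_of_pos_right u (hm_nonneg.lt_of_ne' hm0))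
  · rw [abs_of_nonneg (neg_le_iff_add_nonneg'.mp hm_ge),
      abs_of_nonneg (neg_nonpos.mp (hm_ge.trans hm_nonpos))]
    exact add_lt_of_neg_right u (hm_nonpos.lt_of_ne hm0)

end OrderedAddCommGroup

theorem add_mul_mem_uIcc {α : Type*} [Ring α] [LinearOrder α] [IsOrderedRing α] {s S m θ : α}
    (hm : m ∈ uIcc 0 (S - s)) (hθ : θ ∈ Icc 0 1) : s + θ * m ∈ uIcc s S := by
  rcases mem_uIcc.mp hm with ⟨hm_nonneg, hm_le⟩ | ⟨hm_ge, hm_nonpos⟩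
  · exact mem_uIcc.mpr <| Or.inl ⟨le_add_of_nonneg_right (mul_nonneg hθ.1 hm_nonneg),
      le_sub_iff_add_le'.mp ((mul_le_of_le_one_left hm_nonneg hθ.2).trans hm_le)⟩
  · exact mem_uIcc.mpr <| Or.inr
      ⟨sub_le_iff_le_add'.mp (hm_ge.trans (le_mul_of_le_one_left hm_nonpos hθ.2)),
        add_le_of_nonpos_right (mul_nonpos_of_nonneg_of_nonpos hθ.1 hm_nonpos)⟩

theorem ite_lt_add_mul_div_eq_add_div_mul_min {α : Type*} [Field α] [LinearOrder α] {d : α}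
    (hd : d ≠ 0) (Δ x u : α) :
    (if d > Δ then x + Δ * u / d else x + u) = x + u / d * min Δ d := by
  split_ifs with h
  · rw [min_eq_left h.le]
    ring
  · rw [min_eq_right (not_lt.mp h), div_mul_cancel₀ u hd]

theorem spin_interlacing_mutual_conflict_general
    (r r' v w x y xh yh Δ Δh x₁ y₁ xh₁ yh₁ s S s' S' : ℝ)
    (hv : 0 < v) (hw : w < 0)
    (hΔ : Δ = y - x - r - r') (hΔh : Δh = yh - xh - r - r')
    (hconf : v - w > min Δ Δh)
    (hx₁ : x₁ = if v - w > Δ then x + Δ * v / (v - w) else x + v)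
    (hy₁ : y₁ = if v - w > Δ then y + Δ * w / (v - w) else y + w)
    (hxh₁ : xh₁ = if v - w > Δh then xh + Δh * v / (v - w) else xh + v)
    (hyh₁ : yh₁ = if v - w > Δh then yh + Δh * w / (v - w) else yh + w)
    (hs : s = x - xh) (hS : S = y - yh)
    (hs' : s' = x₁ - xh₁) (hS' : S' = y₁ - yh₁) :
    (min s S ≤ s' ∧ s' ≤ max s S) ∧
    (min s S ≤ S' ∧ S' ≤ max s S) ∧
    (s ≠ S → |s' - S'| < |s - S|) := by
  set d := v - w with hd_def
  have hd : 0 < d := by linarith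
  simp only [ite_lt_add_mul_div_eq_add_div_mul_min hd.ne'] at hx₁ hy₁ hxh₁ hyh₁
  set m := min Δ d - min Δh d
  have hm : m ∈ uIcc 0 (S - s) :=
    (by linarith : Δ - Δh = S - s) ▸ min_sub_min_mem_uIcc Δ Δh d
  have hm' : min Δh d - min Δ d ∈ uIcc 0 (s - S) :=
    (by linarith : Δh - Δ = s - S) ▸ min_sub_min_mem_uIcc Δh Δ d
  have hs'm : s' = s + v / d * m := by rw [hs', hx₁, hxh₁, hs]; ring
  have hS'm : S' = S + -w / d * (min Δh d - min Δ d) := by rw [hS', hy₁, hyh₁, hS]; ring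
  have hv' : v / d ∈ Icc 0 1 := ⟨by positivity, (div_le_one hd).mpr (by linarith)⟩
  have hw' : -w / d ∈ Icc 0 1 :=
    ⟨div_nonneg (by linarith) hd.le, (div_le_one hd).mpr (by linarith)⟩
  refine ⟨hs'm ▸ add_mul_mem_uIcc hm hv',
    hS'm ▸ (uIcc_comm S s).subset (add_mul_mem_uIcc hm' hw'), fun hsS => ?_⟩
  have hdiff : s' - S' = (s - S) + m := by rw [hs'm, hS'm]; field_simp; ring
  rw [hdiff]
  exact abs_add_lt_abs_of_mem_uIcc (by rwa [neg_sub])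
    (min_sub_min_ne_zero (fun h => hsS (by linarith)) hconf)

/-- **Interlacing of spins for mutual conflicts** (inside the proof of Theorem 2
of the paper).  Two statically coupled copies of a pair of neighbouring
particles move towards each other (left with velocity `v > 0`, right with
velocity `w < 0`); the natural resolution of a mutual conflict lets each
particle move with its own velocity for the fraction `Δ / (v - w)` of the time
step.  Then the new spins `s', S'` interlace the old spins `s, S`, and if
`s ≠ S` then `|s' - S'| < |s - S|`. -/
theorem spin_interlacing_mutual_conflict
    (r r' v w x y xh yh Δ Δh x₁ y₁ xh₁ yh₁ s S s' S' : ℝ)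
    (hr : 0 ≤ r) (hr' : 0 ≤ r') (hv : 0 < v) (hw : w < 0)
    (hadm : x + r + r' ≤ y) (hadmh : xh + r + r' ≤ yh)
    (hΔ : Δ = y - x - r - r') (hΔh : Δh = yh - xh - r - r')
    (hconf : v - w > min Δ Δh)
    (hx₁ : x₁ = if v - w > Δ then x + Δ * v / (v - w) else x + v)
    (hy₁ : y₁ = if v - w > Δ then y + Δ * w / (v - w) else y + w)
    (hxh₁ : xh₁ = if v - w > Δh then xh + Δh * v / (v - w) else xh + v)
    (hyh₁ : yh₁ = if v - w > Δh then yh + Δh * w / (v - w) else yh + w)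
    (hs : s = x - xh) (hS : S = y - yh)
    (hs' : s' = x₁ - xh₁) (hS' : S' = y₁ - yh₁) :
    (min s S ≤ s' ∧ s' ≤ max s S) ∧
    (min s S ≤ S' ∧ S' ≤ max s S) ∧
    (s ≠ S → |s' - S'| < |s - S|) :=
  spin_interlacing_mutual_conflict_general r r' v w x y xh yh Δ Δh x₁ y₁ xh₁ yh₁ s S s' S' hv hw hΔ
    hΔh hconf hx₁ hy₁ hxh₁ hyh₁ hs hS hs' hS'
end

section
/- Let n ≥ 2, let r : ZMod n → [0,∞) satisfy L := 1 − 2∑_i r_i > 0, and let v : ZMod n → (0,∞) be constant-in-time velocities whose minimum v_min := min_i v_i is attained at a unique index i₀; assume α := L − n·v_min ≥ 0. Let G := F_v be the parallel gap update map on X_L. Then for every Δ ∈ X_L there exists T such that for all t ≥ T one has (G^t Δ)_i = v_min for every i ≠ i₀ and (G^t Δ)_{i₀} = α + v_min. -/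
set_option linter.unusedSectionVars false
set_option linter.unreachableTactic false
set_option linter.unusedTactic false
set_option maxHeartbeats 1000000

open Finset Filter

section aux
variable {n : ℕ} [NeZero n]

noncomputable def gapM (v : ZMod n → ℝ) : ℕ → ZMod n → ℝ
  | 0, i => v i
  | (k+1), i => min (v i) (gapM v k (i+1))

noncomputable def gapS (Δ : ZMod n → ℝ) : ℕ → ZMod n → ℝ
  | 0, _ => 0
  | (k+1), i => Δ i + gapS Δ k (i+1)

noncomputable def gapY (v Δ : ZMod n → ℝ) : ℕ → ZMod n → ℝ
  | 0, _ => 0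
  | (t+1), i => min (gapY v Δ t i + v i) (Δ i + gapY v Δ t (i+1))

lemma gapM_le_self (v : ZMod n → ℝ) (k : ℕ) (i : ZMod n) : gapM v k i ≤ v i := by
  cases k <;> simp [gapM]

lemma gapM_le (v : ZMod n → ℝ) (k j : ℕ) (hj : j ≤ k) (i : ZMod n) :
    gapM v k i ≤ v (i + (j : ℕ)) := by
  induction k generalizing i j with
  | zero => interval_cases j; simpa using gapM_le_self v 0 i
  | succ k ih =>
    cases j with
    | zero => simpa using gapM_le_self v (k+1) i
    | succ j =>
      have := ih j (by omega) (i + 1)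
      simp only [gapM]
      refine (min_le_right _ _).trans (this.trans_eq ?_)
      congr 1
      push_cast
      ring

lemma le_gapM (v : ZMod n → ℝ) {vmin : ℝ} (hlb : ∀ i, vmin ≤ v i) (k : ℕ) (i : ZMod n) :
    vmin ≤ gapM v k i := by
  induction k generalizing i with
  | zero => simpa [gapM] using hlb i
  | succ k ih => exact le_min (hlb i) (ih (i+1))

lemma gapM_eq_vmin (v : ZMod n → ℝ) {vmin : ℝ} {i₀ : ZMod n} (hmin : v i₀ = vmin)
    (hlb : ∀ i, vmin ≤ v i) {k : ℕ} (hk : n - 1 ≤ k) (i : ZMod n) :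
    gapM v k i = vmin := by
  refine le_antisymm ?_ (le_gapM v hlb k i)
  have hval : (i₀ - i).val ≤ k := by
    have := ZMod.val_lt (i₀ - i); omega
  have h := gapM_le v k (i₀ - i).val hval i
  rwa [ZMod.natCast_zmod_val, add_sub_cancel, hmin] at h

lemma gapS_eq_sum (Δ : ZMod n → ℝ) (k : ℕ) (i : ZMod n) :
    gapS Δ k i = ∑ j ∈ Finset.range k, Δ (i + (j : ℕ)) := by
  induction k generalizing i with
  | zero => simp [gapS]
  | succ k ih =>
    rw [Finset.sum_range_succ']
    simp only [gapS, ih]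
    rw [add_comm]
    congr 1
    · refine Finset.sum_congr rfl fun j _ => ?_
      congr 1; push_cast; ring
    · simp

lemma gapS_cycle (Δ : ZMod n → ℝ) (i : ZMod n) :
    gapS Δ n i = ∑ x : ZMod n, Δ x := by
  rw [gapS_eq_sum]
  rw [show (∑ x : ZMod n, Δ x) = ∑ x : ZMod n, Δ (i + x) from
    (Fintype.sum_equiv (Equiv.addLeft i) _ _ (fun x => rfl)).symm]
  refine Finset.sum_nbij' (fun j => (j : ZMod n)) (fun x => x.val) ?_ ?_ ?_ ?_ ?_ <;>
    simp [ZMod.val_lt, ZMod.natCast_zmod_val, ZMod.val_cast_of_lt]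
  intro a ha
  exact Nat.mod_eq_of_lt (by simpa using ha)

lemma gapS_add_n (Δ : ZMod n → ℝ) (k : ℕ) (i : ZMod n) :
    gapS Δ (k + n) i = gapS Δ k i + ∑ x : ZMod n, Δ x := by
  induction k generalizing i with
  | zero => simpa [gapS] using gapS_cycle Δ i
  | succ k ih =>
    have : k + 1 + n = (k + n) + 1 := by ring
    rw [this]
    simp only [gapS, ih (i+1)]
    ring

lemma gapY_closed (v Δ : ZMod n → ℝ) (t : ℕ) (i : ZMod n) :
    gapY v Δ t i = (Finset.range (t+1)).inf' ⟨0, by simp⟩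
      (fun k => gapS Δ k i + ((t - k : ℕ) : ℝ) * gapM v k i) := by
  induction t generalizing i with
  | zero => simp [gapY, gapS]
  | succ t ih =>
    have hA := ih i
    have hB := ih (i+1)
    simp only [gapY, hA, hB]
    set A : ℕ → ℝ := fun k => gapS Δ k i + ((t - k : ℕ) : ℝ) * gapM v k i with hAdef
    set B : ℕ → ℝ := fun k => gapS Δ k (i+1) + ((t - k : ℕ) : ℝ) * gapM v k (i+1) with hBdef
    set C : ℕ → ℝ := fun k => gapS Δ k i + ((t + 1 - k : ℕ) : ℝ) * gapM v k i with hCdef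
    have hSsucc : ∀ k, gapS Δ (k+1) i = Δ i + gapS Δ k (i+1) := fun k => rfl
    have hMsucc : ∀ k, gapM v (k+1) i = min (v i) (gapM v k (i+1)) := fun k => rfl
    apply le_antisymm
    · refine Finset.le_inf' _ _ fun k hk => ?_
      have hk2 : k ≤ t + 1 := by simpa [Nat.lt_succ_iff] using hk
      match k, hk2 with
      | 0, _ =>
        refine (min_le_left _ _).trans ?_
        have h0 : (Finset.range (t+1)).inf' ⟨0, by simp⟩ A ≤ A 0 :=
          Finset.inf'_le _ (by simp)
        have : A 0 + v i ≤ C 0 := by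
          simp only [hAdef, hCdef]
          simp only [gapS, gapM, Nat.sub_zero]
          push_cast
          ring_nf
          first | rfl | linarith | (exact le_of_eq (by ring))
        linarith
      | (k+1), hk2 =>
        have hkt : k ≤ t := by omega
        by_cases hkeq : k = t
        · refine (min_le_right _ _).trans ?_
          have h0 : (Finset.range (t+1)).inf' ⟨0, by simp⟩ B ≤ B k :=
            Finset.inf'_le _ (by simp; omega)
          have : Δ i + B k ≤ C (k+1) := by
            simp only [hBdef, hCdef, hSsucc]
            have e1 : t - k = 0 := by omega
            have e2 : t + 1 - (k+1) = 0 := by omega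
            rw [e1, e2]
            push_cast
            ring_nf
            first | rfl | linarith | (exact le_of_eq (by ring))
          linarith
        · have hklt : k < t := lt_of_le_of_ne hkt hkeq
          by_cases hm : gapM v k (i+1) ≤ v i
          · refine (min_le_right _ _).trans ?_
            have h0 : (Finset.range (t+1)).inf' ⟨0, by simp⟩ B ≤ B k :=
              Finset.inf'_le _ (by simp [Nat.lt_succ_iff, hkt])
            have : Δ i + B k ≤ C (k+1) := by
              simp only [hBdef, hCdef, hSsucc, hMsucc]
              rw [min_eq_right hm]
              have e : t + 1 - (k+1) = t - k := by omega
              rw [e]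
              ring_nf
              first | rfl | linarith | (exact le_of_eq (by ring))
            linarith
          · push_neg at hm
            refine (min_le_left _ _).trans ?_
            have h0 : (Finset.range (t+1)).inf' ⟨0, by simp⟩ A ≤ A (k+1) :=
              Finset.inf'_le _ (by simp [Nat.lt_succ_iff]; omega)
            have : A (k+1) + v i ≤ C (k+1) := by
              simp only [hAdef, hCdef, hMsucc]
              rw [min_eq_left hm.le]
              have e1 : t - (k+1) = t - k - 1 := by omega
              have e2 : t + 1 - (k+1) = t - k := by omega
              have e3 : ((t - k : ℕ) : ℝ) = ((t - k - 1 : ℕ) : ℝ) + 1 := by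
                have : t - k = (t - k - 1) + 1 := by omega
                rw [this]; push_cast; ring
              rw [e1, e2, e3]
              ring_nf
              first | rfl | linarith | (exact le_of_eq (by ring))
            linarith
    · refine le_min ?_ ?_
      · obtain ⟨k₀, hk₀mem, hk₀⟩ :=
          Finset.exists_mem_eq_inf' (s := Finset.range (t+1)) ⟨0, by simp⟩ A
        have hk₀t : k₀ ≤ t := by simpa [Nat.lt_succ_iff] using hk₀mem
        have h1 : (Finset.range (t+2)).inf' ⟨0, by simp⟩ C ≤ C k₀ :=
          Finset.inf'_le _ (by simp; omega)
        have h2 : C k₀ ≤ A k₀ + v i := by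
          simp only [hAdef, hCdef]
          have e : ((t + 1 - k₀ : ℕ) : ℝ) = ((t - k₀ : ℕ) : ℝ) + 1 := by
            have : t + 1 - k₀ = (t - k₀) + 1 := by omega
            rw [this]; push_cast; ring
          rw [e]
          have := gapM_le_self v k₀ i
          nlinarith
        rw [← hk₀] at h2
        linarith
      · obtain ⟨k₀, hk₀mem, hk₀⟩ :=
          Finset.exists_mem_eq_inf' (s := Finset.range (t+1)) ⟨0, by simp⟩ B
        have hk₀t : k₀ ≤ t := by simpa [Nat.lt_succ_iff] using hk₀mem
        have h1 : (Finset.range (t+2)).inf' ⟨0, by simp⟩ C ≤ C (k₀+1) :=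
          Finset.inf'_le _ (by simp; omega)
        have h2 : C (k₀+1) ≤ Δ i + B k₀ := by
          simp only [hBdef, hCdef, hSsucc, hMsucc]
          have e : t + 1 - (k₀+1) = t - k₀ := by omega
          rw [e]
          have hmle : min (v i) (gapM v k₀ (i+1)) ≤ gapM v k₀ (i+1) := min_le_right _ _
          have hc : (0:ℝ) ≤ ((t - k₀ : ℕ) : ℝ) := by positivity
          nlinarith
        rw [← hk₀] at h2
        linarith

lemma parGap_iter (v Δ : ZMod n → ℝ) (t : ℕ) (i : ZMod n) :
    (parGapUpdate n v)^[t] Δ i = Δ i + gapY v Δ t (i+1) - gapY v Δ t i := by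
  induction t generalizing i with
  | zero => simp [gapY]
  | succ t ih =>
    rw [Function.iterate_succ_apply']
    have h1 : ∀ (a b c : ℝ), min a (b - c) = min (c + a) b - c := fun a b c => by
      rw [← min_sub_sub_right, add_sub_cancel_left]
    show parGapUpdate n v ((parGapUpdate n v)^[t] Δ) i = _
    simp only [parGapUpdate]
    rw [ih i, ih (i+1)]
    show _ = Δ i + gapY v Δ (t+1) (i+1) - gapY v Δ (t+1) i
    simp only [gapY]
    rw [h1 (v i) (Δ i + gapY v Δ t (i+1)) (gapY v Δ t i),
        h1 (v (i+1)) (Δ (i+1) + gapY v Δ t (i+1+1)) (gapY v Δ t (i+1))]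
    ring

lemma parGap_sum (v Δ : ZMod n → ℝ) (t : ℕ) :
    ∑ i : ZMod n, (parGapUpdate n v)^[t] Δ i = ∑ i : ZMod n, Δ i := by
  induction t with
  | zero => simp
  | succ t ih =>
    rw [Function.iterate_succ_apply']
    set w := (parGapUpdate n v)^[t] Δ with hw
    have : ∑ i : ZMod n, parGapUpdate n v w i
        = ∑ i : ZMod n, w i - ∑ i : ZMod n, min (v i) (w i)
          + ∑ i : ZMod n, min (v (i+1)) (w (i+1)) := by
      simp only [parGapUpdate]
      rw [Finset.sum_add_distrib, Finset.sum_sub_distrib]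
    rw [this, ih]
    have hshift : ∑ i : ZMod n, min (v (i+1)) (w (i+1)) = ∑ i : ZMod n, min (v i) (w i) :=
      Fintype.sum_equiv (Equiv.addRight (1 : ZMod n)) _ _ (fun i => rfl)
    rw [hshift]
    ring

end aux
/-- **Claim (5.2) in the proof of Theorem 3 of the paper.**  Deterministic
collective walk with parallel updating, constant positive velocities whose
minimum `vmin` is attained at a unique index `i₀`, and `α = L - n·vmin ≥ 0`:
for every admissible gap configuration `Δ` the trajectory reaches in finite
time the configuration with all gaps equal to `vmin` except the gap at `i₀`,
which equals `α + vmin`, and stays there. -/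
theorem deterministic_gaps_synchronize
    (n : ℕ) [NeZero n] (hn : 2 ≤ n)
    (r : ZMod n → ℝ) (hr : ∀ i, 0 ≤ r i)
    (L : ℝ) (hLdef : L = 1 - 2 * ∑ i : ZMod n, r i) (hL : 0 < L)
    (v : ZMod n → ℝ) (hv : ∀ i, 0 < v i)
    (vmin : ℝ) (i₀ : ZMod n) (hmin : v i₀ = vmin)
    (hlb : ∀ i, vmin ≤ v i) (huniq : ∀ i, i ≠ i₀ → vmin < v i)
    (α : ℝ) (hα : α = L - n * vmin) (hα0 : 0 ≤ α)
    (Δ : ZMod n → ℝ) (hΔpos : ∀ i, 0 ≤ Δ i) (hΔsum : ∑ i : ZMod n, Δ i = L) :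
    ∃ T : ℕ, ∀ t : ℕ, T ≤ t →
      (∀ i : ZMod n, i ≠ i₀ → (parGapUpdate n v)^[t] Δ i = vmin) ∧
      (parGapUpdate n v)^[t] Δ i₀ = α + vmin := by
  classical
  have hn1 : 1 ≤ n := by omega
  have hKne : ∀ i : ZMod n,
      ((Finset.range (2*n)).filter fun k => gapM v k i = vmin).Nonempty := by
    intro i
    refine ⟨n - 1, ?_⟩
    simp only [Finset.mem_filter, Finset.mem_range]
    exact ⟨by omega, gapM_eq_vmin v hmin hlb le_rfl i⟩
  obtain ⟨c, hc⟩ : ∃ c : ZMod n → ℝ, ∀ i,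
      c i = ((Finset.range (2*n)).filter fun k => gapM v k i = vmin).inf' (hKne i)
        (fun k => gapS Δ k i - k * vmin) :=
    ⟨_, fun i => rfl⟩
  have hckey : ∀ k (i : ZMod n), gapM v k i = vmin → c i ≤ gapS Δ k i - k * vmin := by
    intro k
    induction k using Nat.strong_induction_on with
    | _ k ihk =>
      intro i hki
      by_cases hk2n : k < 2*n
      · rw [hc i]
        exact Finset.inf'_le _ (by simp only [Finset.mem_filter, Finset.mem_range]; exact ⟨hk2n, hki⟩)
      · push_neg at hk2n
        have hm' : gapM v (k - n) i = vmin := gapM_eq_vmin v hmin hlb (by omega) i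
        have hIH := ihk (k - n) (by omega) i hm'
        rw [show k = (k - n) + n from by omega]
        rw [gapS_add_n, hΔsum]
        push_cast
        have : ((k - n : ℕ):ℝ) * vmin + (n:ℝ) * vmin
            = ((k - n : ℕ):ℝ) * vmin + (n:ℝ) * vmin := rfl
        have hαexp : L - (n:ℝ) * vmin = α := hα.symm
        linarith
  have hupper : ∀ t, 2*n ≤ t → ∀ i, gapY v Δ t i ≤ c i + t * vmin := by
    intro t ht i
    obtain ⟨k₁, hk₁mem, hk₁⟩ := Finset.exists_mem_eq_inf'
      (s := (Finset.range (2*n)).filter fun k => gapM v k i = vmin) (hKne i)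
      (fun k => gapS Δ k i - k * vmin)
    simp only [Finset.mem_filter, Finset.mem_range] at hk₁mem
    rw [gapY_closed]
    have hterm : (Finset.range (t+1)).inf' ⟨0, by simp⟩
          (fun k => gapS Δ k i + ((t - k : ℕ) : ℝ) * gapM v k i)
        ≤ gapS Δ k₁ i + ((t - k₁ : ℕ):ℝ) * gapM v k₁ i :=
      Finset.inf'_le _ (by simp only [Finset.mem_range]; omega)
    rw [hk₁mem.2] at hterm
    have hcast : ((t - k₁ : ℕ):ℝ) = (t:ℝ) - k₁ := by
      rw [Nat.cast_sub (by omega)]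
    have hci : c i = gapS Δ k₁ i - k₁ * vmin := by rw [hc i, hk₁]
    rw [hcast] at hterm
    have : ((t:ℝ) - k₁) * vmin = t * vmin - k₁ * vmin := by ring
    linarith
  have hev : ∀ᶠ t : ℕ in Filter.atTop, ∀ i : ZMod n, ∀ k ∈ Finset.range n,
      gapM v k i ≠ vmin → c i + t * vmin ≤ gapS Δ k i + ((t:ℝ) - k) * gapM v k i := by
    rw [Filter.eventually_all]
    intro i
    rw [Filter.eventually_all_finset]
    intro k hk
    by_cases hmk : gapM v k i = vmin
    · exact Filter.Eventually.of_forall fun t h => absurd hmk h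
    · have hgt : vmin < gapM v k i := lt_of_le_of_ne (le_gapM v hlb k i) (Ne.symm hmk)
      have hapos : (0:ℝ) < gapM v k i - vmin := by linarith
      obtain ⟨N, hN⟩ := exists_nat_ge
        ((c i + k * gapM v k i - gapS Δ k i) / (gapM v k i - vmin))
      rw [Filter.eventually_atTop]
      refine ⟨N, fun t ht _ => ?_⟩
      have h1 : ((c i + k * gapM v k i - gapS Δ k i) / (gapM v k i - vmin)) * (gapM v k i - vmin)
          ≤ (t:ℝ) * (gapM v k i - vmin) := by
        apply mul_le_mul_of_nonneg_right _ hapos.le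
        exact hN.trans (by exact_mod_cast ht)
      rw [div_mul_cancel₀ _ (ne_of_gt hapos)] at h1
      have e1 : (t:ℝ) * (gapM v k i - vmin) = t * gapM v k i - t * vmin := by ring
      have e2 : ((t:ℝ) - k) * gapM v k i = t * gapM v k i - k * gapM v k i := by ring
      linarith
  obtain ⟨N₀, hN₀⟩ := Filter.eventually_atTop.mp hev
  refine ⟨max N₀ (2*n), fun t ht => ?_⟩
  have hyeq : ∀ s, max N₀ (2*n) ≤ s → ∀ i, gapY v Δ s i = c i + s * vmin := by
    intro s hs i
    refine le_antisymm (hupper s (le_trans (le_max_right _ _) hs) i) ?_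
    rw [gapY_closed]
    refine Finset.le_inf' _ _ fun k hk => ?_
    simp only [Finset.mem_range, Nat.lt_succ_iff] at hk
    have hcast : ((s - k : ℕ):ℝ) = (s:ℝ) - k := by rw [Nat.cast_sub hk]
    by_cases hmk : gapM v k i = vmin
    · have hck := hckey k i hmk
      rw [hmk, hcast]
      have : ((s:ℝ) - k) * vmin = s * vmin - k * vmin := by ring
      linarith
    · have hkn : k < n := by
        by_contra h
        push_neg at h
        exact hmk (gapM_eq_vmin v hmin hlb (by omega) i)
      have := hN₀ s (le_trans (le_max_left _ _) hs) i k (Finset.mem_range.mpr hkn) hmk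
      rw [hcast]
      exact this
  have hmint : ∀ i, min (v i) ((parGapUpdate n v)^[t] Δ i) = vmin := by
    intro i
    have e1 := hyeq t ht i
    have e2 := hyeq (t+1) (le_trans ht (Nat.le_succ t)) i
    have hstep : gapY v Δ (t+1) i
        = min (gapY v Δ t i + v i) (Δ i + gapY v Δ t (i+1)) := rfl
    have hiter := parGap_iter v Δ t i
    have h1 : ∀ (a b cc : ℝ), min a (b - cc) = min (cc + a) b - cc := fun a b cc => by
      rw [← min_sub_sub_right, add_sub_cancel_left]
    rw [hiter, h1, ← hstep, e2, e1]
    push_cast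
    ring
  have hne : ∀ i, i ≠ i₀ → (parGapUpdate n v)^[t] Δ i = vmin := by
    intro i hi
    have h := hmint i
    rcases min_cases (v i) ((parGapUpdate n v)^[t] Δ i) with ⟨he, hle⟩ | ⟨he, hle⟩
    · rw [he] at h
      exact absurd h (ne_of_gt (huniq i hi))
    · rw [he] at h
      exact h
  refine ⟨hne, ?_⟩
  have hsum := parGap_sum v Δ t
  rw [hΔsum] at hsum
  have hsplit : ∑ i : ZMod n, (parGapUpdate n v)^[t] Δ i
      = (parGapUpdate n v)^[t] Δ i₀
        + ∑ i ∈ Finset.univ.erase i₀, (parGapUpdate n v)^[t] Δ i :=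
    (Finset.add_sum_erase _ _ (Finset.mem_univ i₀)).symm
  have herase : ∑ i ∈ Finset.univ.erase i₀, (parGapUpdate n v)^[t] Δ i
      = ((n:ℝ) - 1) * vmin := by
    rw [Finset.sum_congr rfl (fun i hi => hne i (Finset.ne_of_mem_erase hi))]
    rw [Finset.sum_const, Finset.card_erase_of_mem (Finset.mem_univ i₀),
      Finset.card_univ, ZMod.card, nsmul_eq_mul]
    congr 1
    rw [Nat.cast_sub hn1, Nat.cast_one]
  rw [hsplit, herase] at hsum
  rw [hα]
  linarith
end

section
/- Let n ≥ 2, let r : ZMod n → [0,∞) satisfy L := 1 − 2∑_i r_i > 0, and let v : ZMod n → (0,∞) have minimum v_min := min_i v_i attained at a unique index i₀; assume α := L − n·v_min ≥ 0 and that v_min is rational. Define the map T : X_L × AddCircle 1 → X_L × AddCircle 1 by T(Δ, θ) := (F_v(Δ), θ + min{v_{i₀}, Δ_{i₀}}). Then T has at least two distinct invariant Borel probability measures. -/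
/-!
The gap configuration with every gap equal to `vmin`, except the gap ahead of the slowest
particle `i₀`, which holds the remaining length `α`, is a fixed point of `F_v` at which every particle advances by exactly
`vmin`. Over this fixed point `T` acts on the circle fibre as the rotation by `vmin`. A rational
rotation preserves both Lebesgue measure and the uniform measure on one of its finite orbits, and
these differ because only the second has atoms; pushed onto the fibre they are two distinct
`T`-invariant probability measures.
-/

open MeasureTheory

/-- The compact set of admissible gap configurations of total free length `L`. -/
def XL (n : ℕ) [NeZero n] (L : ℝ) : Type :=
  {Δ : ZMod n → ℝ // (∀ i, 0 ≤ Δ i) ∧ ∑ i : ZMod n, Δ i = L}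

noncomputable instance (n : ℕ) [NeZero n] (L : ℝ) : MeasurableSpace (XL n L) :=
  Subtype.instMeasurableSpace

/-- The parallel gap update preserves admissibility (nonnegative velocities). -/
noncomputable def parGapUpdateXL (n : ℕ) [NeZero n] (L : ℝ)
    (v : ZMod n → ℝ) (hv : ∀ i, 0 ≤ v i) (Δ : XL n L) : XL n L :=
  ⟨fun i => Δ.1 i - min (v i) (Δ.1 i) + min (v (i + 1)) (Δ.1 (i + 1)), by
    constructor
    · intro i
      show (0:ℝ) ≤ Δ.1 i - min (v i) (Δ.1 i) + min (v (i + 1)) (Δ.1 (i + 1))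
      have h1 : min (v i) (Δ.1 i) ≤ Δ.1 i := min_le_right _ _
      have h2 : (0 : ℝ) ≤ min (v (i + 1)) (Δ.1 (i + 1)) :=
        le_min (hv _) (Δ.2.1 _)
      linarith
    · have hshift : ∑ i : ZMod n, min (v (i + 1)) (Δ.1 (i + 1)) =
          ∑ i : ZMod n, min (v i) (Δ.1 i) :=
        Fintype.sum_equiv (Equiv.addRight (1 : ZMod n)) _ _ (fun i => rfl)
      have hsum := Δ.2.2
      calc ∑ i : ZMod n, (Δ.1 i - min (v i) (Δ.1 i) + min (v (i + 1)) (Δ.1 (i + 1)))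
          = ∑ i : ZMod n, Δ.1 i - ∑ i : ZMod n, min (v i) (Δ.1 i)
            + ∑ i : ZMod n, min (v (i + 1)) (Δ.1 (i + 1)) := by
            rw [Finset.sum_add_distrib, Finset.sum_sub_distrib]
        _ = L := by rw [hshift, hsum]; ring⟩

open scoped ENNReal

section PeriodicOrbit

variable {α : Type*} [MeasurableSpace α]

noncomputable def periodicOrbitMeasure (f : α → α) (x : α) (p : ℕ) : Measure α :=
  (p : ℝ≥0∞)⁻¹ • ∑ k ∈ Finset.range p, Measure.dirac (f^[k] x)

lemma isProbabilityMeasure_periodicOrbitMeasure (f : α → α) (x : α) {p : ℕ} (hp : p ≠ 0) :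
    IsProbabilityMeasure (periodicOrbitMeasure f x p) := by
  constructor
  simp [periodicOrbitMeasure, ENNReal.inv_mul_cancel (Nat.cast_ne_zero.mpr hp)]

lemma measurePreserving_periodicOrbitMeasure {f : α → α} (hf : Measurable f) {x : α} {p : ℕ}
    (hx : Function.IsPeriodicPt f p x) :
    MeasurePreserving f (periodicOrbitMeasure f x p) (periodicOrbitMeasure f x p) := by
  refine ⟨hf, ?_⟩
  have hshift : ∑ k ∈ Finset.range p, Measure.dirac (f^[k + 1] x) =
      ∑ k ∈ Finset.range p, Measure.dirac (f^[k] x) := by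
    rcases p with _ | m
    · simp
    · rw [Finset.sum_range_succ, hx.eq, Finset.sum_range_succ' (fun k => Measure.dirac (f^[k] x)),
        Function.iterate_zero_apply]
  simp only [periodicOrbitMeasure, Measure.map_smul, Measure.map_finset_sum hf.aemeasurable,
    Measure.map_dirac' hf, ← Function.iterate_succ_apply' f, hshift]

lemma periodicOrbitMeasure_apply_ne_zero_of_mem (f : α → α) {x : α} {p : ℕ} (hp : p ≠ 0)
    {s : Set α} (hs : x ∈ s) : periodicOrbitMeasure f x p s ≠ 0 := by
  have hx : 1 ≤ ∑ k ∈ Finset.range p, Measure.dirac (f^[k] x) s :=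
    calc (1 : ℝ≥0∞) = Measure.dirac (f^[0] x) s := (Measure.dirac_apply_of_mem hs).symm
      _ ≤ _ := Finset.single_le_sum (f := fun k => Measure.dirac (f^[k] x) s)
          (fun _ _ => zero_le) (Finset.mem_range.mpr (Nat.pos_of_ne_zero hp))
  simp only [periodicOrbitMeasure, Measure.smul_apply, Measure.coe_finsetSum, Finset.sum_apply,
    smul_eq_mul]
  exact mul_ne_zero (ENNReal.inv_ne_zero.mpr (ENNReal.natCast_ne_top p))
    (zero_lt_one.trans_le hx).ne'

end PeriodicOrbit

lemma AddCircle.isPeriodicPt_add_coe_ratCast_mul {𝕜 : Type*} [Field 𝕜] [LinearOrder 𝕜]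
    [IsStrictOrderedRing 𝕜] {p : 𝕜} [Fact (0 < p)] (q : ℚ) (θ : AddCircle p) :
    Function.IsPeriodicPt (· + ((q * p : 𝕜) : AddCircle p)) q.den θ := by
  rw [Function.IsPeriodicPt, Function.IsFixedPt, add_right_iterate,
    ← AddCircle.addOrderOf_coe_rat (p := p), addOrderOf_nsmul_eq_zero]
  exact add_zero θ

lemma AddCircle.volume_singleton_eq_zero (θ : AddCircle (1 : ℝ)) : volume {θ} = 0 := by
  simpa using AddCircle.volume_closedBall 1 (x := θ) 0

lemma AddCircle.exists_ne_invariant_probabilityMeasures_add_ratCast (q : ℚ) :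
    ∃ ν₁ ν₂ : Measure (AddCircle (1 : ℝ)), ν₁ ≠ ν₂ ∧
      (IsProbabilityMeasure ν₁ ∧ MeasurePreserving (· + ((q : ℝ) : AddCircle (1 : ℝ))) ν₁ ν₁) ∧
      (IsProbabilityMeasure ν₂ ∧ MeasurePreserving (· + ((q : ℝ) : AddCircle (1 : ℝ))) ν₂ ν₂) := by
  have hrot : Function.IsPeriodicPt (· + ((q : ℝ) : AddCircle (1 : ℝ))) q.den 0 := by
    simpa using AddCircle.isPeriodicPt_add_coe_ratCast_mul (p := (1 : ℝ)) q 0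
  refine ⟨periodicOrbitMeasure (· + ((q : ℝ) : AddCircle (1 : ℝ))) 0 q.den, volume, ?_,
    ⟨isProbabilityMeasure_periodicOrbitMeasure _ _ q.den_nz,
      measurePreserving_periodicOrbitMeasure (measurable_add_const _) hrot⟩,
    ⟨⟨by simp⟩, measurePreserving_add_right volume _⟩⟩
  intro h
  exact periodicOrbitMeasure_apply_ne_zero_of_mem _ q.den_nz (Set.mem_singleton 0)
    (h ▸ AddCircle.volume_singleton_eq_zero 0)

section SkewProduct

variable {X Y : Type*} [MeasurableSpace X] [MeasurableSpace Y]

lemma measurePreserving_map_prodMk_of_fiber {T : X × Y → X × Y} (hT : Measurable T) {x₀ : X}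
    {g : Y → Y} (hfiber : ∀ y, T (x₀, y) = (x₀, g y)) {ν : Measure Y}
    (hν : MeasurePreserving g ν ν) :
    MeasurePreserving T (ν.map (Prod.mk x₀)) (ν.map (Prod.mk x₀)) := by
  refine ⟨hT, ?_⟩
  rw [Measure.map_map hT measurable_prodMk_left, show T ∘ Prod.mk x₀ = Prod.mk x₀ ∘ g from
    funext hfiber, ← Measure.map_map measurable_prodMk_left hν.measurable, hν.map_eq]

lemma map_prodMk_left_injective (x₀ : X) :
    Function.Injective fun ν : Measure Y => ν.map (Prod.mk x₀) := by
  intro ν₁ ν₂ h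
  simpa [Measure.map_map measurable_snd measurable_prodMk_left, Function.comp_def] using
    congrArg (Measure.map Prod.snd) h

lemma exists_ne_invariant_probabilityMeasures_of_fiber {T : X × Y → X × Y} (hT : Measurable T)
    {x₀ : X} {g : Y → Y} (hfiber : ∀ y, T (x₀, y) = (x₀, g y))
    (hg : ∃ ν₁ ν₂ : Measure Y, ν₁ ≠ ν₂ ∧ (IsProbabilityMeasure ν₁ ∧ MeasurePreserving g ν₁ ν₁) ∧
      (IsProbabilityMeasure ν₂ ∧ MeasurePreserving g ν₂ ν₂)) :
    ∃ μ₁ μ₂ : Measure (X × Y), μ₁ ≠ μ₂ ∧ (IsProbabilityMeasure μ₁ ∧ μ₁.map T = μ₁) ∧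
      (IsProbabilityMeasure μ₂ ∧ μ₂.map T = μ₂) := by
  obtain ⟨ν₁, ν₂, hne, ⟨hν₁, hg₁⟩, ⟨hν₂, hg₂⟩⟩ := hg
  exact ⟨ν₁.map (Prod.mk x₀), ν₂.map (Prod.mk x₀), (map_prodMk_left_injective x₀).ne hne,
    ⟨Measure.isProbabilityMeasure_map measurable_prodMk_left.aemeasurable,
      (measurePreserving_map_prodMk_of_fiber hT hfiber hg₁).map_eq⟩,
    ⟨Measure.isProbabilityMeasure_map measurable_prodMk_left.aemeasurable,
      (measurePreserving_map_prodMk_of_fiber hT hfiber hg₂).map_eq⟩⟩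

end SkewProduct

section Gaps

variable {n : ℕ} [NeZero n] {L : ℝ}

lemma measurable_parGapUpdateXL (v : ZMod n → ℝ) (hv : ∀ i, 0 ≤ v i) :
    Measurable (parGapUpdateXL n L v hv) := by
  have hcoord : ∀ i, Measurable fun Δ : XL n L => Δ.1 i :=
    fun i => (measurable_pi_apply i).comp measurable_subtype_coe
  refine Measurable.subtype_mk (measurable_pi_lambda _ fun i => ?_)
  exact ((hcoord i).sub (measurable_const.min (hcoord i))).add
    (measurable_const.min (hcoord (i + 1)))

noncomputable def stationaryGaps (L c : ℝ) (i₀ : ZMod n) (hc : 0 ≤ c) (hα : 0 ≤ L - n * c) :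
    XL n L :=
  ⟨fun i => c + (Pi.single i₀ (L - n * c) : ZMod n → ℝ) i, fun i =>
    add_nonneg hc ((Pi.single_nonneg (α := fun _ => ℝ)).mpr hα i), by
    change ∑ i, (c + (Pi.single i₀ (L - n * c) : ZMod n → ℝ) i) = L
    rw [Finset.sum_add_distrib, Finset.sum_const, Finset.sum_pi_single', if_pos (Finset.mem_univ _),
      Finset.card_univ, ZMod.card, nsmul_eq_mul]
    ring⟩

variable {c : ℝ} {i₀ : ZMod n} {v : ZMod n → ℝ}

lemma min_stationaryGaps (hc : 0 ≤ c) (hα : 0 ≤ L - n * c) (hvc : ∀ i, c ≤ v i) (hvi₀ : v i₀ = c)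
    (j : ZMod n) : min (v j) ((stationaryGaps L c i₀ hc hα).1 j) = c := by
  change min (v j) (c + (Pi.single i₀ (L - n * c) : ZMod n → ℝ) j) = c
  by_cases hj : j = i₀
  · subst hj
    rw [Pi.single_eq_same, hvi₀]
    exact min_eq_left (by linarith)
  · rw [Pi.single_eq_of_ne hj, add_zero]
    exact min_eq_right (hvc j)

lemma parGapUpdateXL_stationaryGaps (hc : 0 ≤ c) (hα : 0 ≤ L - n * c) (hvc : ∀ i, c ≤ v i)
    (hvi₀ : v i₀ = c) (hv : ∀ i, 0 ≤ v i) :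
    parGapUpdateXL n L v hv (stationaryGaps L c i₀ hc hα) = stationaryGaps L c i₀ hc hα := by
  refine Subtype.ext (funext fun i => ?_)
  change _ - min (v i) _ + min (v (i + 1)) _ = _
  rw [min_stationaryGaps hc hα hvc hvi₀, min_stationaryGaps hc hα hvc hvi₀]
  ring

end Gaps

theorem deterministic_walk_not_uniquely_ergodic_of_rational_general
    (n : ℕ) [NeZero n]
    (L : ℝ)
    (v : ZMod n → ℝ) (hv : ∀ i, 0 < v i)
    (vmin : ℝ) (i₀ : ZMod n) (hmin : v i₀ = vmin)
    (hlb : ∀ i, vmin ≤ v i)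
    (α : ℝ) (hα : α = L - n * vmin) (hα0 : 0 ≤ α)
    (hrat : ∃ Q : ℚ, (Q : ℝ) = vmin)
    (T : XL n L × AddCircle (1 : ℝ) → XL n L × AddCircle (1 : ℝ))
    (hT : T = fun p =>
      (parGapUpdateXL n L v (fun i => (hv i).le) p.1,
        p.2 + ((min (v i₀) (p.1.1 i₀) : ℝ) : AddCircle (1 : ℝ)))) :
    ∃ μ₁ μ₂ : Measure (XL n L × AddCircle (1 : ℝ)),
      μ₁ ≠ μ₂ ∧
      (IsProbabilityMeasure μ₁ ∧ μ₁.map T = μ₁) ∧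
      (IsProbabilityMeasure μ₂ ∧ μ₂.map T = μ₂) := by
  obtain ⟨q, rfl⟩ := hrat
  subst hT hα
  have hq : 0 ≤ (q : ℝ) := hmin ▸ (hv i₀).le
  have hTm : Measurable fun p : XL n L × AddCircle (1 : ℝ) =>
      (parGapUpdateXL n L v (fun i => (hv i).le) p.1,
        p.2 + ((min (v i₀) (p.1.1 i₀) : ℝ) : AddCircle (1 : ℝ))) :=
    ((measurable_parGapUpdateXL v _).comp measurable_fst).prodMk <| measurable_snd.add <|
      AddCircle.measurable_mk'.comp <| measurable_const.min <|
        (measurable_pi_apply i₀).comp (measurable_subtype_coe.comp measurable_fst)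
  refine exists_ne_invariant_probabilityMeasures_of_fiber hTm (x₀ := stationaryGaps L q i₀ hq hα0)
    (fun θ => ?_) (AddCircle.exists_ne_invariant_probabilityMeasures_add_ratCast q)
  rw [parGapUpdateXL_stationaryGaps hq hα0 hlb hmin, min_stationaryGaps hq hα0 hlb hmin]

/-- **Theorem 3 of the paper, necessity part.**  The deterministic collective
walk of `n` hard balls with constant positive velocities `v_i`, unique slowest
particle `i₀`, `α ≥ 0` and *rational* `vmin`, written in the coordinates
(gap configuration, position of particle `i₀` on the circle), has at least two
distinct invariant Borel probability measures. -/
theorem deterministic_walk_not_uniquely_ergodic_of_rational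
    (n : ℕ) [NeZero n] (hn : 2 ≤ n)
    (r : ZMod n → ℝ) (hr : ∀ i, 0 ≤ r i)
    (L : ℝ) (hLdef : L = 1 - 2 * ∑ i : ZMod n, r i) (hL : 0 < L)
    (v : ZMod n → ℝ) (hv : ∀ i, 0 < v i)
    (vmin : ℝ) (i₀ : ZMod n) (hmin : v i₀ = vmin)
    (hlb : ∀ i, vmin ≤ v i) (huniq : ∀ i, i ≠ i₀ → vmin < v i)
    (α : ℝ) (hα : α = L - n * vmin) (hα0 : 0 ≤ α)
    (hrat : ∃ Q : ℚ, (Q : ℝ) = vmin)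
    (T : XL n L × AddCircle (1 : ℝ) → XL n L × AddCircle (1 : ℝ))
    (hT : T = fun p =>
      (parGapUpdateXL n L v (fun i => (hv i).le) p.1,
        p.2 + ((min (v i₀) (p.1.1 i₀) : ℝ) : AddCircle (1 : ℝ)))) :
    ∃ μ₁ μ₂ : Measure (XL n L × AddCircle (1 : ℝ)),
      μ₁ ≠ μ₂ ∧
      (IsProbabilityMeasure μ₁ ∧ μ₁.map T = μ₁) ∧
      (IsProbabilityMeasure μ₂ ∧ μ₂.map T = μ₂) :=
  deterministic_walk_not_uniquely_ergodic_of_rational_general n L v hv vmin i₀ hmin hlb α hα hα0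
    hrat T hT
end

section
/- Let n ≥ 2 and 0 < L ≤ 1. Let v : ℕ → (ZMod n → [0,∞)) be time-dependent nonnegative velocities and let Δ : ℕ → (ZMod n → ℝ) be the parallel gap trajectory: Δ⁰ ∈ X_L and Δ^{t+1} = F_{v^t}(Δ^t) for every t. Fix an index i and a time t₀, and suppose that for some τ one has ∑_{t = t₀}^{t₀ + τ} (v^t_i − v^t_{i+1}) > 1. Then there exists t with t₀ ≤ t ≤ t₀ + τ such that v^t_i > Δ^t_i, i.e. the i-th particle interacts with the (i+1)-th one at time t. -/
/-- **Sufficient condition (2.8) of Theorem 4 of the paper** for the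
chain-interacting property under parallel updating: along the parallel gap
trajectory with time-dependent nonnegative velocities, if
`∑_{t=t₀}^{t₀+τ} (v^t_i - v^t_{i+1}) > 1`, then at some time
`t ∈ [t₀, t₀ + τ]` the `i`-th particle interacts with the `(i+1)`-th one,
i.e. `v^t_i > Δ^t_i`. -/
theorem chain_interaction_of_velocity_sum
    (n : ℕ) [NeZero n] (hn : 2 ≤ n)
    (L : ℝ) (hL0 : 0 < L) (hL1 : L ≤ 1)
    (v : ℕ → ZMod n → ℝ) (hv : ∀ t i, 0 ≤ v t i)
    (Δ : ℕ → ZMod n → ℝ)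
    (h0pos : ∀ i, 0 ≤ Δ 0 i) (h0sum : ∑ i : ZMod n, Δ 0 i = L)
    (hstep : ∀ t : ℕ, Δ (t + 1) = parGapUpdate n (v t) (Δ t))
    (i : ZMod n) (t₀ τ : ℕ)
    (hsum : 1 < ∑ t ∈ Finset.Icc t₀ (t₀ + τ), (v t i - v t (i + 1))) :
    ∃ t : ℕ, t₀ ≤ t ∧ t ≤ t₀ + τ ∧ Δ t i < v t i := by
  by_contra hcon
  push_neg at hcon
  -- gaps stay nonnegative
  have hpos : ∀ t j, 0 ≤ Δ t j := by
    intro t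
    induction t with
    | zero => exact h0pos
    | succ t ih =>
      intro j
      rw [hstep]
      unfold parGapUpdate
      have h1 : min (v t j) (Δ t j) ≤ Δ t j := min_le_right _ _
      have h2 : (0:ℝ) ≤ min (v t (j + 1)) (Δ t (j + 1)) :=
        le_min (hv t _) (ih _)
      linarith
  -- total sum is preserved
  have hsumL : ∀ t, ∑ j : ZMod n, Δ t j = L := by
    intro t
    induction t with
    | zero => exact h0sum
    | succ t ih =>
      rw [hstep]
      unfold parGapUpdate
      rw [Finset.sum_add_distrib, Finset.sum_sub_distrib]
      have hshift : ∑ j : ZMod n, min (v t (j + 1)) (Δ t (j + 1))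
          = ∑ j : ZMod n, min (v t j) (Δ t j) :=
        Fintype.sum_equiv (Equiv.addRight (1 : ZMod n)) _ _ (fun j => rfl)
      rw [hshift, ih]
      ring
  -- each gap is at most L
  have hle : Δ t₀ i ≤ L := by
    rw [← hsumL t₀]
    exact Finset.single_le_sum (fun j _ => hpos t₀ j) (Finset.mem_univ i)
  -- key decrease estimate
  have key : ∀ k, k ≤ τ →
      Δ (t₀ + k + 1) i ≤ Δ t₀ i - ∑ t ∈ Finset.Icc t₀ (t₀ + k), (v t i - v t (i + 1)) := by
    intro k
    induction k with
    | zero =>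
      intro _
      rw [hstep]
      unfold parGapUpdate
      simp only [Nat.add_zero, Finset.Icc_self, Finset.sum_singleton]
      have hv1 : v t₀ i ≤ Δ t₀ i := hcon t₀ le_rfl (Nat.le_add_right _ _)
      have h1 : min (v t₀ i) (Δ t₀ i) = v t₀ i := min_eq_left hv1
      have h2 : min (v t₀ (i + 1)) (Δ t₀ (i + 1)) ≤ v t₀ (i + 1) := min_le_left _ _
      rw [h1]; linarith
    | succ k ih =>
      intro hk
      have hk' : k ≤ τ := Nat.le_of_succ_le hk
      have ih' := ih hk'
      rw [hstep]
      unfold parGapUpdate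
      have hmem : t₀ ≤ t₀ + (k + 1) := Nat.le_add_right _ _
      have hmem2 : t₀ + (k + 1) ≤ t₀ + τ := Nat.add_le_add_left hk _
      have hv1 : v (t₀ + (k + 1)) i ≤ Δ (t₀ + (k + 1)) i := hcon _ hmem hmem2
      have h1 : min (v (t₀ + (k + 1)) i) (Δ (t₀ + (k + 1)) i) = v (t₀ + (k + 1)) i :=
        min_eq_left hv1
      have h2 : min (v (t₀ + (k + 1)) (i + 1)) (Δ (t₀ + (k + 1)) (i + 1))
          ≤ v (t₀ + (k + 1)) (i + 1) := min_le_left _ _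
      have hicc : Finset.Icc t₀ (t₀ + (k + 1))
          = insert (t₀ + (k + 1)) (Finset.Icc t₀ (t₀ + k)) := by
        ext x
        simp [Nat.lt_succ_iff, Nat.le_succ_iff, ← Nat.add_assoc]
        omega
      rw [hicc, Finset.sum_insert (by simp)]
      have : Δ (t₀ + (k + 1)) i ≤ Δ t₀ i - ∑ t ∈ Finset.Icc t₀ (t₀ + k), (v t i - v t (i + 1)) := by
        have : t₀ + (k + 1) = t₀ + k + 1 := by ring
        rw [this]; exact ih'
      rw [h1]; linarith
  have hfinal := key τ le_rfl
  have := hpos (t₀ + τ + 1) i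
  linarith
end
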